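/- arXiv:2306.09072 — 5 statements merged into one kernel-verified Lean document; each statement's English description precedes it below -/
import Mathlib

section
/- The characteristic cone of a box-integer polyhedron P ⊆ ℝ^n is generated by vectors with entries in {−1, 0, +1}; that is, char.cone P equals the set of all finite nonnegative linear combinations of some vectors in {−1,0,+1}^n. -/
open Set Pointwise

noncomputable section

/-- Embedding of integer vectors into real vectors. -/
def coeZ {n : ℕ} (z : Fin n → ℤ) : Fin n → ℝ := fun i => (z i : ℝ)

/-- A (nonempty) polyhedron: solution set of a finite system of linear inequalities. -/
def IsPolyhedron {n : ℕ} (P : Set (Fin n → ℝ)) : Prop :=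
  P.Nonempty ∧ ∃ (m : ℕ) (A : Matrix (Fin m) (Fin n) ℝ) (b : Fin m → ℝ),
    P = {x | A.mulVec x ≤ b}

/-- The integer points of a set `P ⊆ ℝ^n`. -/
def intPts {n : ℕ} (P : Set (Fin n → ℝ)) : Set (Fin n → ℝ) :=
  {x ∈ P | ∀ i, ∃ z : ℤ, x i = (z : ℝ)}

/-- The box `{x : l ≤ x ≤ u}` with integral bounds. -/
def intBox {n : ℕ} (l u : Fin n → ℤ) : Set (Fin n → ℝ) :=
  {x | ∀ i, (l i : ℝ) ≤ x i ∧ x i ≤ (u i : ℝ)}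

/-- A set `P ⊆ ℝ^n` is box-integer if its intersection with every integral box,
whenever nonempty, equals the convex hull of its integer points. -/
def IsBoxInteger {n : ℕ} (P : Set (Fin n → ℝ)) : Prop :=
  ∀ l u : Fin n → ℤ, l ≤ u → (P ∩ intBox l u).Nonempty →
    P ∩ intBox l u = convexHull ℝ (intPts (P ∩ intBox l u))

/-- A set closed under multiplication by nonnegative scalars. -/
def IsConeSet {n : ℕ} (C : Set (Fin n → ℝ)) : Prop :=
  ∀ x ∈ C, ∀ lam : ℝ, 0 ≤ lam → lam • x ∈ C

/-- The characteristic (recession) cone of `P`. -/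
def charCone {n : ℕ} (P : Set (Fin n → ℝ)) : Set (Fin n → ℝ) :=
  {d | ∀ x ∈ P, x + d ∈ P}

/-- The integral neighborhood `N(x)` of a real vector `x`. -/
def intNbhd {n : ℕ} (x : Fin n → ℝ) : Set (Fin n → ℤ) :=
  {z | ∀ i, |x i - (z i : ℝ)| < 1}

/-- The convex hull (in `ℝ^n`) of a set of integer vectors. -/
def convZ {n : ℕ} (S : Set (Fin n → ℤ)) : Set (Fin n → ℝ) :=
  convexHull ℝ (coeZ '' S)

/-- A nonempty set `S ⊆ ℤ^n` is integrally convex if every point `x` of its convex hull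
belongs to the convex hull of `S ∩ N(x)`. -/
def IntegrallyConvex {n : ℕ} (S : Set (Fin n → ℤ)) : Prop :=
  S.Nonempty ∧ ∀ x ∈ convZ S, x ∈ convZ (S ∩ intNbhd x)

/-- An L♮-convex polyhedron, given by its standard inequality description. -/
def IsLNatPolyhedron {n : ℕ} (P : Set (Fin n → ℝ)) : Prop :=
  P.Nonempty ∧ ∃ (I J : Set (Fin n)) (E : Set (Fin n × Fin n))
    (l u : Fin n → ℤ) (dd : Fin n × Fin n → ℤ),
    P = {x | (∀ i ∈ I, (l i : ℝ) ≤ x i) ∧ (∀ j ∈ J, x j ≤ (u j : ℝ)) ∧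
             (∀ p ∈ E, x p.2 - x p.1 ≤ (dd p : ℝ))}

/-- An L²♮-convex polyhedron: the Minkowski sum of two L♮-convex polyhedra. -/
def IsL2NatPolyhedron {n : ℕ} (P : Set (Fin n → ℝ)) : Prop :=
  ∃ P₁ P₂ : Set (Fin n → ℝ), IsLNatPolyhedron P₁ ∧ IsLNatPolyhedron P₂ ∧ P = P₁ + P₂

/-- An M♮-convex set of integer vectors (exchange axiom). -/
def IsMNatSet {n : ℕ} (S : Set (Fin n → ℤ)) : Prop :=
  S.Nonempty ∧ ∀ x ∈ S, ∀ y ∈ S, ∀ i : Fin n, y i < x i →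
    ((x - Pi.single i 1 ∈ S ∧ y + Pi.single i 1 ∈ S) ∨
     ∃ j : Fin n, x j < y j ∧ x - Pi.single i 1 + Pi.single j 1 ∈ S ∧
       y + Pi.single i 1 - Pi.single j 1 ∈ S)

/-- An M♮-convex polyhedron: the convex hull of an M♮-convex set. -/
def IsMNatPolyhedron {n : ℕ} (P : Set (Fin n → ℝ)) : Prop :=
  ∃ S : Set (Fin n → ℤ), IsMNatSet S ∧ P = convZ S

/-- An L♮-convex set of integer vectors (closed under componentwise
rounded-up and rounded-down midpoints). -/
def IsLNatSet {n : ℕ} (S : Set (Fin n → ℤ)) : Prop :=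
  S.Nonempty ∧ ∀ x ∈ S, ∀ y ∈ S,
    (fun i => ⌈(x i + y i : ℚ) / 2⌉) ∈ S ∧ (fun i => ⌊(x i + y i : ℚ) / 2⌋) ∈ S

/-- An L²♮-convex set: the Minkowski sum of two L♮-convex sets. -/
def IsL2NatSet {n : ℕ} (S : Set (Fin n → ℤ)) : Prop :=
  ∃ S₁ S₂ : Set (Fin n → ℤ), IsLNatSet S₁ ∧ IsLNatSet S₂ ∧ S = S₁ + S₂

open Filter Topology

namespace BoxInt

variable {n m : ℕ}

/-- real dot product -/
def dotR (c x : Fin n → ℝ) : ℝ := ∑ i, c i * x i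

lemma dotR_add_right (c x y : Fin n → ℝ) : dotR c (x + y) = dotR c x + dotR c y := by
  simp [dotR, mul_add, Finset.sum_add_distrib]

lemma dotR_smul_right (c x : Fin n → ℝ) (a : ℝ) : dotR c (a • x) = a * dotR c x := by
  simp only [dotR, Finset.mul_sum]
  exact Finset.sum_congr rfl fun i _ => by simp [Pi.smul_apply]; ring

lemma dotR_add_left (c c' x : Fin n → ℝ) : dotR (c + c') x = dotR c x + dotR c' x := by
  simp [dotR, add_mul, Finset.sum_add_distrib]

lemma dotR_smul_left (c x : Fin n → ℝ) (a : ℝ) : dotR (a • c) x = a * dotR c x := by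
  simp only [dotR, Finset.mul_sum]
  exact Finset.sum_congr rfl fun i _ => by simp [Pi.smul_apply]; ring

lemma isLinearMap_dotR (c : Fin n → ℝ) : IsLinearMap ℝ (dotR c) := by
  constructor
  · exact dotR_add_right c
  · intro a x; exact dotR_smul_right c x a

lemma continuous_dotR (c : Fin n → ℝ) : Continuous (dotR c) := by
  unfold dotR
  exact continuous_finset_sum _ fun i _ => (continuous_const.mul (continuous_apply i))

/-- dot with a single coordinate functional -/
lemma dotR_single (i : Fin n) (x : Fin n → ℝ) :
    dotR (coeZ (Pi.single i 1)) x = x i := by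
  unfold dotR coeZ
  rw [Finset.sum_eq_single i]
  · simp
  · intro j _ hj; simp [Pi.single_apply, hj]
  · simp

/-- A linear functional's bound passes to convex hulls. -/
lemma dotR_le_of_mem_convexHull {s : Set (Fin n → ℝ)} {c : Fin n → ℝ} {M : ℝ}
    (hs : ∀ y ∈ s, dotR c y ≤ M) {x : Fin n → ℝ} (hx : x ∈ convexHull ℝ s) :
    dotR c x ≤ M := by
  have h : s ⊆ {y | dotR c y ≤ M} := hs
  have hconv : Convex ℝ {y | dotR c y ≤ M} := convex_halfSpace_le (isLinearMap_dotR c) M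
  exact convexHull_min h hconv hx


lemma mem_charCone_iff {P : Set (Fin n → ℝ)} {A : Matrix (Fin m) (Fin n) ℝ} {b : Fin m → ℝ}
    (hPeq : P = {x | A.mulVec x ≤ b}) {x₀ : Fin n → ℝ} (hx₀ : x₀ ∈ P) (d : Fin n → ℝ) :
    d ∈ charCone P ↔ A.mulVec d ≤ 0 := by
  constructor
  · intro hd
    have hiter : ∀ k : ℕ, x₀ + (k : ℝ) • d ∈ P := by
      intro k; induction k with
      | zero => simpa using hx₀
      | succ k ih =>
        have h2 := hd _ ih
        have : x₀ + ((k : ℝ) + 1) • d = x₀ + (k : ℝ) • d + d := by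
          rw [add_smul, one_smul, add_assoc]
        push_cast
        rw [this]; exact h2
    intro i
    by_contra hpos
    push_neg at hpos
    simp only [Pi.zero_apply] at hpos
    obtain ⟨k, hk⟩ := exists_nat_gt ((b i - A.mulVec x₀ i) / A.mulVec d i)
    have hk2 := hiter k
    rw [hPeq] at hk2
    have hineq := hk2 i
    rw [Matrix.mulVec_add, Matrix.mulVec_smul] at hineq
    simp only [Pi.add_apply, Pi.smul_apply, smul_eq_mul] at hineq
    have : (k : ℝ) ≤ (b i - A.mulVec x₀ i) / A.mulVec d i := by
      rw [le_div_iff₀ hpos]; linarith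
    linarith
  · intro hd x hx
    rw [hPeq] at hx ⊢
    intro i
    have := hd i
    simp only [Matrix.mulVec_add, Pi.add_apply, Pi.zero_apply] at *
    have h2 := hx i
    linarith

lemma intPts_subset_image (P : Set (Fin n → ℝ)) (l u : Fin n → ℤ) :
    intPts (P ∩ intBox l u) ⊆ coeZ '' (Set.Icc l u) := by
  rintro x ⟨⟨_, hbx⟩, hint⟩
  refine ⟨fun i => (hint i).choose, ⟨?_, ?_⟩, ?_⟩
  · intro i
    have := (hint i).choose_spec
    have hb := (hbx i).1
    rw [this] at hb
    exact_mod_cast hb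
  · intro i
    have := (hint i).choose_spec
    have hb := (hbx i).2
    rw [this] at hb
    exact_mod_cast hb
  · funext i; exact ((hint i).choose_spec).symm

lemma intPts_finite (P : Set (Fin n → ℝ)) (l u : Fin n → ℤ) :
    (intPts (P ∩ intBox l u)).Finite :=
  Set.Finite.subset ((Set.finite_Icc l u).image coeZ) (intPts_subset_image P l u)

lemma exists_int_max {P : Set (Fin n → ℝ)} (hbox : IsBoxInteger P) {l u : Fin n → ℤ}
    (hlu : l ≤ u) (hne : (intPts (P ∩ intBox l u)).Nonempty) (c : Fin n → ℝ) :
    ∃ w : Fin n → ℤ, coeZ w ∈ P ∩ intBox l u ∧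
      ∀ x ∈ P ∩ intBox l u, dotR c x ≤ dotR c (coeZ w) := by
  have hfin := intPts_finite P l u
  have hne' : (P ∩ intBox l u).Nonempty := hne.mono (fun x hx => hx.1)
  have heq := hbox l u hlu hne'
  obtain ⟨y, hy, hymax⟩ :=
    Finset.exists_max_image hfin.toFinset (dotR c) (by simpa using hne)
  rw [Set.Finite.mem_toFinset] at hy
  obtain ⟨hyP, hyint⟩ := hy
  refine ⟨fun i => (hyint i).choose, ?_, ?_⟩
  · have : coeZ (fun i => (hyint i).choose) = y := by
      funext i; exact ((hyint i).choose_spec).symm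
    rw [this]; exact hyP
  · have hcoe : coeZ (fun i => (hyint i).choose) = y := by
      funext i; exact ((hyint i).choose_spec).symm
    rw [hcoe]
    intro x hx
    rw [heq] at hx
    exact dotR_le_of_mem_convexHull
      (fun z hz => hymax z (by rwa [Set.Finite.mem_toFinset])) hx

lemma exists_intPt {P : Set (Fin n → ℝ)} (hbox : IsBoxInteger P) (hne : P.Nonempty) :
    ∃ w : Fin n → ℤ, coeZ w ∈ P := by
  obtain ⟨p, hp⟩ := hne
  set l : Fin n → ℤ := fun i => ⌊p i⌋ with hl
  set u : Fin n → ℤ := fun i => ⌈p i⌉ with hu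
  have hlu : l ≤ u := fun i => Int.floor_le_ceil _
  have hpb : p ∈ intBox l u := fun i => ⟨Int.floor_le _, Int.le_ceil _⟩
  have hne' : (P ∩ intBox l u).Nonempty := ⟨p, hp, hpb⟩
  have heq := hbox l u hlu hne'
  have hmem : p ∈ convexHull ℝ (intPts (P ∩ intBox l u)) := heq ▸ ⟨hp, hpb⟩
  have hne2 : (intPts (P ∩ intBox l u)).Nonempty := by
    by_contra h
    rw [Set.not_nonempty_iff_eq_empty] at h
    rw [h, convexHull_empty] at hmem
    exact hmem
  obtain ⟨x, ⟨hxP, _⟩, hxint⟩ := hne2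
  refine ⟨fun i => (hxint i).choose, ?_⟩
  have : coeZ (fun i => (hxint i).choose) = x := by
    funext i; exact ((hxint i).choose_spec).symm
  rw [this]; exact hxP

/-- the slice of the cone {Ad ≤ 0} by the unit box -/
def K (A : Matrix (Fin m) (Fin n) ℝ) : Set (Fin n → ℝ) :=
  {d | A.mulVec d ≤ 0 ∧ ∀ i, |d i| ≤ 1}

lemma K_subset_Icc (A : Matrix (Fin m) (Fin n) ℝ) :
    K A ⊆ Set.Icc (fun _ => (-1 : ℝ)) (fun _ => 1) := by
  rintro d ⟨_, hd⟩
  constructor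
  · intro i; exact (abs_le.mp (hd i)).1
  · intro i; exact (abs_le.mp (hd i)).2

lemma K_compact (A : Matrix (Fin m) (Fin n) ℝ) : IsCompact (K A) := by
  apply IsCompact.of_isClosed_subset isCompact_Icc ?_ (K_subset_Icc A)
  have h1 : IsClosed {d : Fin n → ℝ | A.mulVec d ≤ 0} := by
    have : {d : Fin n → ℝ | A.mulVec d ≤ 0} = ⋂ i, {d | A.mulVec d i ≤ 0} := by
      ext d; simp [Pi.le_def]
    rw [this]
    refine isClosed_iInter fun i => ?_
    have hc : Continuous fun d : Fin n → ℝ => A.mulVec d i := by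
      simp only [Matrix.mulVec, dotProduct]
      exact continuous_finset_sum _ fun j _ => continuous_const.mul (continuous_apply j)
    exact isClosed_le hc continuous_const
  have h2 : IsClosed {d : Fin n → ℝ | ∀ i, |d i| ≤ 1} := by
    have : {d : Fin n → ℝ | ∀ i, |d i| ≤ 1} = ⋂ i, {d | |d i| ≤ 1} := by
      ext d; simp
    rw [this]
    exact isClosed_iInter fun i =>
      isClosed_le (continuous_abs.comp (continuous_apply i)) continuous_const
  exact h1.inter h2

lemma K_zero_mem (A : Matrix (Fin m) (Fin n) ℝ) : (0 : Fin n → ℝ) ∈ K A := by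
  constructor
  · rw [Matrix.mulVec_zero]
  · intro i; simp

lemma ray_mem {P : Set (Fin n → ℝ)} {A : Matrix (Fin m) (Fin n) ℝ} {b : Fin m → ℝ}
    (hPeq : P = {x | A.mulVec x ≤ b}) {w₀ : Fin n → ℤ} (hw₀ : coeZ w₀ ∈ P)
    {d : Fin n → ℝ} (hd : d ∈ K A) (s : ℝ) (hs : 0 ≤ s) (t : ℕ) (hst : s ≤ t) :
    coeZ w₀ + s • d ∈ P ∩ intBox (fun i => w₀ i - t) (fun i => w₀ i + t) := by
  obtain ⟨hd1, hd2⟩ := hd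
  constructor
  · rw [hPeq]
    intro i
    rw [Matrix.mulVec_add, Matrix.mulVec_smul]
    simp only [Pi.add_apply, Pi.smul_apply, smul_eq_mul]
    have h1 : A.mulVec (coeZ w₀) i ≤ b i := by
      rw [hPeq] at hw₀; exact hw₀ i
    have h2 : A.mulVec d i ≤ 0 := hd1 i
    nlinarith
  · intro i
    simp only [Pi.add_apply, Pi.smul_apply, smul_eq_mul, coeZ]
    have := abs_le.mp (hd2 i)
    have habs : |s * d i| ≤ s := by
      rw [abs_mul, abs_of_nonneg hs]
      nlinarith [abs_nonneg (d i), abs_le.mpr this]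
    have := abs_le.mp habs
    constructor
    · push_cast; linarith
    · push_cast; linarith

lemma dotR_sub_right (c x y : Fin n → ℝ) : dotR c (x - y) = dotR c x - dotR c y := by
  simp [dotR, mul_sub, Finset.sum_sub_distrib]

lemma dotR_row (A : Matrix (Fin m) (Fin n) ℝ) (i : Fin m) (x : Fin n → ℝ) :
    dotR (A i) x = A.mulVec x i := by
  simp [dotR, Matrix.mulVec, dotProduct]

set_option maxHeartbeats 1000000 in
lemma key_base {P : Set (Fin n → ℝ)} {A : Matrix (Fin m) (Fin n) ℝ} {b : Fin m → ℝ}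
    (hPeq : P = {x | A.mulVec x ≤ b}) (hbox : IsBoxInteger P)
    {w₀ : Fin n → ℤ} (hw₀ : coeZ w₀ ∈ P) (c : Fin n → ℤ) :
    ∃ y ∈ K A, (∀ x ∈ K A, dotR (coeZ c) x ≤ dotR (coeZ c) y) ∧
      ∃ z : ℤ, dotR (coeZ c) y = z := by
  set cR := coeZ c with hcRdef
  obtain ⟨dm, hdmK, hdmax⟩ := (K_compact A).exists_isMaxOn ⟨0, K_zero_mem A⟩
    (continuous_dotR cR).continuousOn
  set mK := dotR cR dm with hmKdef
  refine ⟨dm, hdmK, hdmax, ?_⟩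
  -- boxes around w₀ of radius t
  have hlu : ∀ t : ℕ, (fun i => w₀ i - (t : ℤ)) ≤ (fun i => w₀ i + (t : ℤ)) := by
    intro t i; simp only; omega
  have hne : ∀ t : ℕ,
      (intPts (P ∩ intBox (fun i => w₀ i - (t:ℤ)) (fun i => w₀ i + (t:ℤ)))).Nonempty := by
    intro t
    refine ⟨coeZ w₀, ⟨⟨hw₀, ?_⟩, fun i => ⟨w₀ i, rfl⟩⟩⟩
    intro i
    constructor
    · push_cast [coeZ]; linarith [Nat.cast_nonneg (α := ℝ) t]
    · push_cast [coeZ]; linarith [Nat.cast_nonneg (α := ℝ) t]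
  have hch : ∀ t : ℕ, ∃ w : Fin n → ℤ,
      coeZ w ∈ P ∩ intBox (fun i => w₀ i - (t:ℤ)) (fun i => w₀ i + (t:ℤ)) ∧
      ∀ x ∈ P ∩ intBox (fun i => w₀ i - (t:ℤ)) (fun i => w₀ i + (t:ℤ)),
        dotR cR x ≤ dotR cR (coeZ w) :=
    fun t => exists_int_max hbox (hlu t) (hne t) cR
  choose w hwmem hwmax using hch
  have hwP : ∀ t, coeZ (w t) ∈ P := fun t => (hwmem t).1
  have hwb : ∀ t, ∀ i, ((w₀ i : ℝ) - t ≤ (w t i : ℝ)) ∧ ((w t i : ℝ) ≤ (w₀ i : ℝ) + t) := by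
    intro t i
    have h := (hwmem t).2 i
    constructor
    · have := h.1; push_cast at this ⊢; simpa [coeZ] using this
    · have := h.2; push_cast at this ⊢; simpa [coeZ] using this
  set N : ℕ → ℤ := fun t => ∑ i, c i * w t i with hNdef
  have hNval : ∀ t, (N t : ℝ) = dotR cR (coeZ (w t)) := by
    intro t; simp only [hNdef, dotR, hcRdef, coeZ]; push_cast; ring
  set Nc0 : ℤ := ∑ i, c i * w₀ i with hNc0def
  have hNc0val : (Nc0 : ℝ) = dotR cR (coeZ w₀) := by
    simp only [hNc0def, dotR, hcRdef, coeZ]; push_cast; ring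
  -- lower bound
  have hLB : ∀ t : ℕ, (Nc0 : ℝ) + t * mK ≤ (N t : ℝ) := by
    intro t
    have hmem := ray_mem hPeq hw₀ hdmK (t : ℝ) (Nat.cast_nonneg t) t le_rfl
    have := hwmax t _ hmem
    rw [dotR_add_right, dotR_smul_right] at this
    rw [hNval t, hNc0val]
    linarith
  -- concavity
  have hconc : ∀ t : ℕ, N t + N (t + 2) ≤ 2 * N (t + 1) := by
    intro t
    set y := (1/2 : ℝ) • (coeZ (w t) + coeZ (w (t + 2))) with hydef
    have hyP : y ∈ P := by
      rw [hPeq]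
      intro i
      have h1 : A.mulVec (coeZ (w t)) i ≤ b i := by
        have := hwP t; rw [hPeq] at this; exact this i
      have h2 : A.mulVec (coeZ (w (t+2))) i ≤ b i := by
        have := hwP (t+2); rw [hPeq] at this; exact this i
      rw [hydef, Matrix.mulVec_smul, Matrix.mulVec_add]
      simp only [Pi.smul_apply, Pi.add_apply, smul_eq_mul]
      linarith
    have hybox : y ∈ intBox (fun i => w₀ i - ((t:ℤ)+1)) (fun i => w₀ i + ((t:ℤ)+1)) := by
      intro i
      have h1 := hwb t i
      have h2 := hwb (t+2) i
      simp only [hydef, Pi.smul_apply, Pi.add_apply, smul_eq_mul, coeZ]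
      push_cast at h1 h2 ⊢
      constructor <;> linarith
    have hmax := hwmax (t+1) y (by
      constructor
      · exact hyP
      · convert hybox using 2 <;> funext i <;> push_cast <;> ring)
    have hyval : dotR cR y = ((N t : ℝ) + (N (t+2) : ℝ)) / 2 := by
      rw [hydef, dotR_smul_right, dotR_add_right, ← hNval, ← hNval]; ring
    rw [hyval, ← hNval] at hmax
    have : (N t : ℝ) + (N (t+2) : ℝ) ≤ 2 * (N (t+1) : ℝ) := by linarith
    exact_mod_cast this
  set δ : ℕ → ℤ := fun t => N (t + 1) - N t with hδdef
  have hδanti : Antitone δ := antitone_nat_of_succ_le (by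
    intro t
    have h := hconc t
    have e : t + 1 + 1 = t + 2 := rfl
    simp only [hδdef, e]
    omega)
  have hlbδ : ∀ t : ℕ, mK ≤ (δ t : ℝ) := by
    intro t
    by_contra h
    push_neg at h
    have hcum : ∀ k : ℕ, N (t + k) ≤ N t + k * δ t := by
      intro k; induction k with
      | zero => simp
      | succ k ih =>
        have hs : δ (t + k) ≤ δ t := hδanti (Nat.le_add_right t k)
        have h1 : N (t + k + 1) = N (t + k) + δ (t + k) := by simp [hδdef]
        have h2 : t + (k + 1) = t + k + 1 := rfl
        rw [h2, h1]
        have e : ((k:ℤ) + 1) * δ t = (k:ℤ) * δ t + δ t := by ring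
        push_cast
        linarith
    obtain ⟨k, hk⟩ := exists_nat_gt (((N t : ℝ) - Nc0 - t * mK) / (mK - (δ t : ℝ)))
    have hpos : (0:ℝ) < mK - δ t := by linarith
    have h1 := hLB (t + k)
    have h2 : (N (t+k) : ℝ) ≤ (N t : ℝ) + k * (δ t : ℝ) := by exact_mod_cast hcum k
    have h3 : ((N t : ℝ) - Nc0 - t * mK) < k * (mK - (δ t:ℝ)) := by
      rw [div_lt_iff₀ hpos] at hk; linarith
    push_cast at h1
    nlinarith
  -- stabilization
  set B : ℤ := ⌈mK⌉ with hBdef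
  have hB : ∀ t, B ≤ δ t := fun t => Int.ceil_le.mpr (hlbδ t)
  set g : ℕ → ℕ := fun t => (δ t - B).toNat with hgdef
  have hgmem : sInf (Set.range g) ∈ Set.range g := Nat.sInf_mem ⟨g 0, 0, rfl⟩
  obtain ⟨t₀, ht₀⟩ := hgmem
  have hstab : ∀ t, t₀ ≤ t → δ t = δ t₀ := by
    intro t ht
    have h1 : g t₀ ≤ g t := by rw [ht₀]; exact Nat.sInf_le ⟨t, rfl⟩
    have h2 := hB t
    have h3 := hB t₀
    have h4 : δ t ≤ δ t₀ := hδanti ht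
    simp only [hgdef] at h1
    omega
  set δs : ℤ := δ t₀ with hδsdef
  have hform : ∀ k : ℕ, N (t₀ + k) = N t₀ + k * δs := by
    intro k; induction k with
    | zero => simp
    | succ k ih =>
      have h1 : N (t₀ + k + 1) = N (t₀ + k) + δ (t₀ + k) := by simp [hδdef]
      have h2 : δ (t₀ + k) = δs := hstab _ (Nat.le_add_right t₀ k)
      have h3 : t₀ + (k+1) = t₀ + k + 1 := rfl
      rw [h3, h1, h2, ih]
      push_cast
      ring
  -- the normalized sequence
  set D : ℕ → (Fin n → ℝ) := fun k =>
    (((t₀ + k + 1 : ℕ) : ℝ))⁻¹ • (coeZ (w (t₀ + k + 1)) - coeZ w₀) with hDdef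
  have hT : ∀ k : ℕ, (0:ℝ) < ((t₀ + k + 1 : ℕ) : ℝ) := by
    intro k; positivity
  have hDmem : ∀ k, D k ∈ Set.Icc (fun _ : Fin n => (-1:ℝ)) (fun _ => 1) := by
    intro k
    have hb' := hwb (t₀ + k + 1)
    have hT' := hT k
    have hTne : (((t₀ + k + 1 : ℕ)):ℝ) ≠ 0 := ne_of_gt hT'
    constructor <;> intro i
    · have h1 := (hb' i).1
      simp only [hDdef, Pi.smul_apply, Pi.sub_apply, smul_eq_mul, coeZ]
      have hXl : -(((t₀ + k + 1 : ℕ)):ℝ) ≤ ((w (t₀+k+1) i : ℝ) - (w₀ i : ℝ)) := by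
        linarith
      have hmul := mul_le_mul_of_nonneg_left hXl (inv_nonneg.mpr hT'.le)
      rw [mul_neg, inv_mul_cancel₀ hTne] at hmul
      linarith
    · have h2 := (hb' i).2
      simp only [hDdef, Pi.smul_apply, Pi.sub_apply, smul_eq_mul, coeZ]
      have hXu : ((w (t₀+k+1) i : ℝ) - (w₀ i : ℝ)) ≤ (((t₀ + k + 1 : ℕ)):ℝ) := by
        linarith
      have hmul := mul_le_mul_of_nonneg_left hXu (inv_nonneg.mpr hT'.le)
      rw [inv_mul_cancel₀ hTne] at hmul
      linarith
  -- value of dotR along D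
  set E : ℝ := (N t₀ : ℝ) - Nc0 - t₀ * δs with hEdef
  have hDval : ∀ k : ℕ, dotR cR (D k) = (δs:ℝ) + E / ((t₀ + k + 1 : ℕ):ℝ) := by
    intro k
    have hform' : (N (t₀ + k + 1) : ℝ) = (N t₀ : ℝ) + ((k:ℝ)+1) * (δs:ℝ) := by
      have h4 := hform (k+1)
      have e : t₀ + (k+1) = t₀ + k + 1 := rfl
      rw [e] at h4
      exact_mod_cast h4
    simp only [hDdef]
    rw [dotR_smul_right, dotR_sub_right, ← hNval, ← hNc0val, hform']
    have hTne : (((t₀ + k + 1 : ℕ)):ℝ) ≠ 0 := ne_of_gt (hT k)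
    field_simp
    push_cast
    ring
  have hNat : Tendsto (fun k : ℕ => t₀ + k + 1) atTop atTop :=
    tendsto_atTop_mono (fun k => by simp only [id_eq]; omega) tendsto_id
  have hEtend : Tendsto (fun k : ℕ => E / (((t₀ + k + 1:ℕ)):ℝ)) atTop (𝓝 0) :=
    Tendsto.div_atTop tendsto_const_nhds (tendsto_natCast_atTop_atTop.comp hNat)
  have htendval : Tendsto (fun k => dotR cR (D k)) atTop (𝓝 (δs:ℝ)) := by
    simp only [hDval]
    have hconst : Tendsto (fun _ : ℕ => (δs:ℝ)) atTop (𝓝 (δs:ℝ)) := tendsto_const_nhds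
    simpa using hconst.add hEtend
  obtain ⟨dst, hdstIcc, φ, hφmono, hφtend⟩ :=
    (isCompact_Icc : IsCompact (Set.Icc (fun _ : Fin n => (-1:ℝ)) (fun _ => 1))).tendsto_subseq
      hDmem
  have hφatTop : Tendsto φ atTop atTop := hφmono.tendsto_atTop
  have hrow : A.mulVec dst ≤ 0 := by
    intro i
    have hcont : Tendsto (fun k => dotR (A i) (D (φ k))) atTop (𝓝 (dotR (A i) dst)) :=
      ((continuous_dotR (A i)).tendsto dst).comp hφtend
    have hub : ∀ k, dotR (A i) (D k) ≤ (b i - dotR (A i) (coeZ w₀)) / (((t₀+k+1:ℕ)):ℝ) := by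
      intro k
      have hPz : A.mulVec (coeZ (w (t₀+k+1))) i ≤ b i := by
        have h5 := hwP (t₀+k+1); rw [hPeq] at h5; exact h5 i
      simp only [hDdef]
      rw [dotR_smul_right, dotR_sub_right, dotR_row, dotR_row, div_eq_inv_mul]
      apply mul_le_mul_of_nonneg_left _ (inv_nonneg.mpr (hT k).le)
      linarith
    have hg : Tendsto (fun k => (b i - dotR (A i) (coeZ w₀)) / (((t₀ + k + 1:ℕ)):ℝ))
        atTop (𝓝 0) :=
      Tendsto.div_atTop tendsto_const_nhds (tendsto_natCast_atTop_atTop.comp hNat)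
    have hle := le_of_tendsto_of_tendsto' hcont (hg.comp hφatTop) (fun k => hub (φ k))
    have : dotR (A i) dst ≤ 0 := hle
    rw [dotR_row] at this
    simpa using this
  have habs : ∀ i, |dst i| ≤ 1 := by
    intro i
    obtain ⟨hl, hr⟩ := hdstIcc
    exact abs_le.mpr ⟨hl i, hr i⟩
  have hdstK : dst ∈ K A := ⟨hrow, habs⟩
  have hval : dotR cR dst = (δs : ℝ) :=
    tendsto_nhds_unique (((continuous_dotR cR).tendsto dst).comp hφtend)
      (htendval.comp hφatTop)
  refine ⟨δs, ?_⟩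
  have h1 : (δs:ℝ) ≤ mK := hval ▸ hdmax hdstK
  have h2 : mK ≤ (δs:ℝ) := hlbδ t₀
  rw [← hmKdef]
  exact le_antisymm (le_of_not_gt (fun hc => absurd h2 (not_le.mpr hc)))
    (le_of_not_gt (fun hc => absurd h1 (not_le.mpr hc)))

/-- compact nonempty sets over which every integral functional has an
integral attained maximum -/
def Good (Q : Set (Fin n → ℝ)) : Prop :=
  IsCompact Q ∧ Q.Nonempty ∧
  ∀ c : Fin n → ℤ, ∃ y ∈ Q, (∀ x ∈ Q, dotR (coeZ c) x ≤ dotR (coeZ c) y) ∧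
    ∃ z : ℤ, dotR (coeZ c) y = z

lemma coeZ_combo (N : ℕ) (u e : Fin n → ℤ) :
    coeZ ((N + 1) • u + e) = ((N : ℝ) + 1) • coeZ u + coeZ e := by
  funext i
  have h : ((N + 1) • u + e) i = ((N:ℤ)+1) * u i + e i := by
    simp only [Pi.add_apply, Pi.smul_apply, nsmul_eq_mul, Pi.mul_apply, Pi.natCast_apply,
      Pi.one_apply]
    push_cast
    ring
  simp only [coeZ, h, Pi.add_apply, Pi.smul_apply, smul_eq_mul]
  push_cast
  ring

lemma face_step {Q : Set (Fin n → ℝ)} (hQ : Good Q) (u : Fin n → ℤ) :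
    ∃ F : Set (Fin n → ℝ), F ⊆ Q ∧ Good F ∧ ∃ z : ℤ,
      (∀ y ∈ F, dotR (coeZ u) y = z) ∧ (∀ x ∈ Q, dotR (coeZ u) x ≤ z) := by
  obtain ⟨hQc, hQne, hQint⟩ := hQ
  obtain ⟨yu, hyuQ, hyumax, zu, hzu⟩ := hQint u
  set F : Set (Fin n → ℝ) := {y ∈ Q | dotR (coeZ u) y = zu} with hFdef
  have hFQ : F ⊆ Q := fun y hy => hy.1
  have hFc : IsCompact F := by
    have : F = Q ∩ {y | dotR (coeZ u) y = zu} := rfl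
    rw [this]
    exact hQc.inter_right (isClosed_eq (continuous_dotR _) continuous_const)
  have hFne : F.Nonempty := ⟨yu, hyuQ, hzu⟩
  have hFval : ∀ y ∈ F, dotR (coeZ u) y = (zu : ℝ) := fun y hy => hy.2
  have hFmax : ∀ x ∈ Q, dotR (coeZ u) x ≤ (zu : ℝ) := fun x hx => hzu ▸ hyumax x hx
  refine ⟨F, hFQ, ⟨hFc, hFne, ?_⟩, zu, hFval, hFmax⟩
  -- integrality of max over F for each integral functional e
  intro e
  obtain ⟨yF, hyFF, hyFmax⟩ := hFc.exists_isMaxOn hFne (continuous_dotR (coeZ e)).continuousOn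
  set mF := dotR (coeZ e) yF with hmFdef
  refine ⟨yF, hyFF, hyFmax, ?_⟩
  -- the approximating functionals
  have hch : ∀ N : ℕ, ∃ y ∈ Q,
      (∀ x ∈ Q, dotR (coeZ ((N+1) • u + e)) x ≤ dotR (coeZ ((N+1) • u + e)) y) ∧
      ∃ z : ℤ, dotR (coeZ ((N+1) • u + e)) y = z := fun N => hQint ((N+1) • u + e)
  choose y' hy'Q hy'max z' hz' using hch
  have hdot : ∀ (N : ℕ) (x : Fin n → ℝ), dotR (coeZ ((N+1) • u + e)) x
      = ((N:ℝ)+1) * dotR (coeZ u) x + dotR (coeZ e) x := by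
    intro N x
    rw [coeZ_combo, dotR_add_left, dotR_smul_left]
  set γ : ℕ → ℤ := fun N => z' N - (N+1) * zu with hγdef
  have hγval : ∀ N : ℕ, (γ N : ℝ) =
      dotR (coeZ e) (y' N) + ((N:ℝ)+1) * (dotR (coeZ u) (y' N) - zu) := by
    intro N
    have h1 := hz' N
    rw [hdot] at h1
    simp only [hγdef]
    push_cast
    linarith
  have hule : ∀ N, dotR (coeZ u) (y' N) ≤ (zu:ℝ) := fun N => hFmax _ (hy'Q N)
  have hγanti : Antitone γ := by
    apply antitone_nat_of_succ_le
    intro N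
    have h1 := hγval N
    have h2 := hγval (N+1)
    have h3 : dotR (coeZ ((N+1) • u + e)) (y' (N+1)) ≤ dotR (coeZ ((N+1) • u + e)) (y' N) :=
      hy'max N _ (hy'Q (N+1))
    rw [hdot, hdot] at h3
    have h4 := hule (N+1)
    have : (γ (N+1) : ℝ) ≤ (γ N : ℝ) := by push_cast at h2 ⊢; nlinarith
    exact_mod_cast this
  have hγlb : ∀ N, mF ≤ (γ N : ℝ) := by
    intro N
    have h3 : dotR (coeZ ((N+1) • u + e)) yF ≤ dotR (coeZ ((N+1) • u + e)) (y' N) :=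
      hy'max N _ (hFQ hyFF)
    rw [hdot, hdot] at h3
    have h5 := hFval yF hyFF
    have h1 := hγval N
    nlinarith [hule N]
  -- stabilization
  set B : ℤ := ⌈mF⌉ with hBdef
  have hB : ∀ N, B ≤ γ N := fun N => Int.ceil_le.mpr (hγlb N)
  set g : ℕ → ℕ := fun N => (γ N - B).toNat with hgdef
  have hgmem : sInf (Set.range g) ∈ Set.range g := Nat.sInf_mem ⟨g 0, 0, rfl⟩
  obtain ⟨N₀, hN₀⟩ := hgmem
  have hstab : ∀ N, N₀ ≤ N → γ N = γ N₀ := by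
    intro N hN
    have h1 : g N₀ ≤ g N := by rw [hN₀]; exact Nat.sInf_le ⟨N, rfl⟩
    have h2 := hB N
    have h3 := hB N₀
    have h4 : γ N ≤ γ N₀ := hγanti hN
    simp only [hgdef] at h1
    omega
  set γs : ℤ := γ N₀ with hγsdef
  -- uniform bound on |dotR e| over Q
  obtain ⟨yR, _, hyRmax⟩ := hQc.exists_isMaxOn hQne
    ((continuous_abs.comp (continuous_dotR (coeZ e))).continuousOn)
  set R := |dotR (coeZ e) yR| with hRdef
  have hRbound : ∀ x ∈ Q, |dotR (coeZ e) x| ≤ R := fun x hx => hyRmax hx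
  -- subsequence of maximizers
  obtain ⟨ys, hysQ, φ, hφmono, hφtend⟩ := hQc.tendsto_subseq (fun k => hy'Q (N₀ + k))
  have hφatTop : Tendsto φ atTop atTop := hφmono.tendsto_atTop
  have hT : ∀ k : ℕ, (0:ℝ) < ((N₀ + k:ℕ):ℝ) + 1 := by intro k; positivity
  -- equality of γ along the tail
  have hγeq : ∀ k : ℕ, γ (N₀ + k) = γs := fun k => hstab _ (Nat.le_add_right N₀ k)
  -- dotR u (y' (N₀+k)) bounds
  have hulb : ∀ k : ℕ, (zu:ℝ) + ((γs:ℝ) - R) / (((N₀+k:ℕ):ℝ)+1) ≤ dotR (coeZ u) (y' (N₀+k)) := by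
    intro k
    have h1 := hγval (N₀+k)
    rw [hγeq k] at h1
    have h2 : dotR (coeZ e) (y' (N₀+k)) ≤ R := (abs_le.mp (hRbound _ (hy'Q (N₀+k)))).2
    have h3 : ((γs:ℝ) - R) / (((N₀+k:ℕ):ℝ)+1) ≤ (dotR (coeZ u) (y' (N₀+k)) - zu) := by
      rw [div_le_iff₀ (hT k)]
      nlinarith
    linarith
  have hcontu : Tendsto (fun k => dotR (coeZ u) (y' (N₀ + φ k))) atTop (𝓝 (dotR (coeZ u) ys)) :=
    ((continuous_dotR (coeZ u)).tendsto ys).comp hφtend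
  have hNat : Tendsto (fun k : ℕ => ((N₀ + k:ℕ):ℝ) + 1) atTop atTop := by
    apply tendsto_atTop_add_const_right
    apply tendsto_natCast_atTop_atTop.comp
    exact tendsto_atTop_mono (fun k => by simp only [id_eq]; omega) tendsto_id
  have hzero : Tendsto (fun k : ℕ => ((γs:ℝ) - R) / (((N₀+k:ℕ):ℝ)+1)) atTop (𝓝 0) :=
    Tendsto.div_atTop tendsto_const_nhds hNat
  have hysu : dotR (coeZ u) ys = (zu:ℝ) := by
    have hle : dotR (coeZ u) ys ≤ (zu:ℝ) :=
      le_of_tendsto_of_tendsto' hcontu tendsto_const_nhds (fun k => hule (N₀ + φ k))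
    have hge : (zu:ℝ) ≤ dotR (coeZ u) ys := by
      have hlow : Tendsto (fun k => (zu:ℝ) + ((γs:ℝ) - R) / (((N₀+φ k:ℕ):ℝ)+1)) atTop (𝓝 (zu:ℝ)) := by
        have hconst : Tendsto (fun _ : ℕ => (zu:ℝ)) atTop (𝓝 (zu:ℝ)) := tendsto_const_nhds
        have := hconst.add (hzero.comp hφatTop)
        simpa using this
      exact le_of_tendsto_of_tendsto' hlow hcontu (fun k => hulb (φ k))
    linarith
  have hysF : ys ∈ F := ⟨hysQ, hysu⟩
  -- dotR e ys ≥ γs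
  have heub : ∀ k : ℕ, (γs:ℝ) ≤ dotR (coeZ e) (y' (N₀+k)) := by
    intro k
    have h1 := hγval (N₀+k)
    rw [hγeq k] at h1
    have h2 := hule (N₀+k)
    nlinarith [hT k]
  have hconte : Tendsto (fun k => dotR (coeZ e) (y' (N₀ + φ k))) atTop (𝓝 (dotR (coeZ e) ys)) :=
    ((continuous_dotR (coeZ e)).tendsto ys).comp hφtend
  have hge : (γs:ℝ) ≤ dotR (coeZ e) ys :=
    le_of_tendsto_of_tendsto' tendsto_const_nhds hconte (fun k => heub (φ k))
  have hle2 : dotR (coeZ e) ys ≤ mF := hyFmax hysF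
  have hγsmF : mF = (γs:ℝ) := le_antisymm (hγlb N₀) (by linarith)
  exact ⟨γs, hγsmF⟩

lemma chain : ∀ (k : ℕ) (Q : Set (Fin n → ℝ)), Good Q →
    ∃ x ∈ Q, ∀ i : Fin n, (i : ℕ) < k → ∃ z : ℤ, x i = (z:ℝ) := by
  intro k
  induction k with
  | zero =>
    intro Q hQ
    obtain ⟨x, hx⟩ := hQ.2.1
    exact ⟨x, hx, fun i h => absurd h (Nat.not_lt_zero _)⟩
  | succ k ih =>
    intro Q hQ
    by_cases hk : k < n
    · obtain ⟨F, hFQ, hFGood, z, hz, _⟩ := face_step hQ (Pi.single ⟨k, hk⟩ 1)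
      obtain ⟨x, hxF, hxint⟩ := ih F hFGood
      refine ⟨x, hFQ hxF, fun i hi => ?_⟩
      by_cases hik : (i:ℕ) < k
      · exact hxint i hik
      · have hie : (i:ℕ) = k := by omega
        have hival := hz x hxF
        rw [dotR_single] at hival
        have : i = ⟨k, hk⟩ := Fin.ext hie
        rw [this]
        exact ⟨z, hival⟩
    · obtain ⟨x, hxQ, hxint⟩ := ih Q hQ
      exact ⟨x, hxQ, fun i hi => hxint i (by have := i.isLt; omega)⟩

lemma good_has_int_point {Q : Set (Fin n → ℝ)} (hQ : Good Q) :
    ∃ x ∈ Q, ∀ i, ∃ z : ℤ, x i = (z:ℝ) := by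
  obtain ⟨x, hxQ, hx⟩ := chain n Q hQ
  exact ⟨x, hxQ, fun i => hx i i.isLt⟩

lemma subset_hull {Q : Set (Fin n → ℝ)} (hQ : Good Q)
    (hbdd : ∀ x ∈ Q, ∀ i, |x i| ≤ 1) :
    Q ⊆ convexHull ℝ {x ∈ Q | ∀ i, ∃ z : ℤ, x i = (z:ℝ)} := by
  set V : Set (Fin n → ℝ) := {x ∈ Q | ∀ i, ∃ z : ℤ, x i = (z:ℝ)} with hVdef
  have hVfin : V.Finite := by
    apply Set.Finite.subset (Set.Finite.image coeZ
      (Set.finite_Icc (fun _ : Fin n => (-1:ℤ)) (fun _ => 1)))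
    rintro x ⟨hxQ, hxint⟩
    refine ⟨fun i => (hxint i).choose, ⟨fun i => ?_, fun i => ?_⟩, ?_⟩
    · have hs := (hxint i).choose_spec
      have hb := hbdd x hxQ i
      rw [hs] at hb
      have : -(1:ℝ) ≤ ((hxint i).choose : ℝ) := by
        have := (abs_le.mp hb).1; exact_mod_cast this
      exact_mod_cast this
    · have hs := (hxint i).choose_spec
      have hb := hbdd x hxQ i
      rw [hs] at hb
      have : ((hxint i).choose : ℝ) ≤ 1 := (abs_le.mp hb).2
      exact_mod_cast this
    · funext i; exact ((hxint i).choose_spec).symm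
  intro xs hxs
  by_contra hnot
  have hVconv : Convex ℝ (convexHull ℝ V) := convex_convexHull ℝ V
  have hVclosed : IsClosed (convexHull ℝ V) := (hVfin.isCompact_convexHull ℝ).isClosed
  obtain ⟨f, s, hfs, hsx⟩ := geometric_hahn_banach_closed_point hVconv hVclosed hnot
  set c₀ : Fin n → ℝ := fun i => f (fun j => if i = j then 1 else 0) with hc₀def
  have hfx : ∀ y : Fin n → ℝ, f y = dotR c₀ y := by
    intro y
    conv_lhs => rw [pi_eq_sum_univ y]
    rw [map_sum]
    simp only [map_smul, smul_eq_mul]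
    unfold dotR
    exact Finset.sum_congr rfl fun i _ => mul_comm _ _
  set gap : ℝ := f xs - s with hgapdef
  have hgap : 0 < gap := by simp [hgapdef]; linarith
  set ε : ℝ := gap / (2 * n + 2) with hεdef
  have hε : 0 < ε := by
    apply div_pos hgap
    positivity
  obtain ⟨M, hM⟩ := exists_nat_gt (1 / ε)
  have hMpos : (0:ℝ) < M := lt_trans (by positivity) hM
  have h1M : 1 / (M:ℝ) < ε := by
    rw [div_lt_iff₀ hMpos]
    rw [div_lt_iff₀ hε] at hM
    linarith [mul_comm ε (M:ℝ)]
  set c' : Fin n → ℤ := fun i => ⌊c₀ i * M⌋ with hc'def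
  have happrox : ∀ i, |(c' i : ℝ) / M - c₀ i| < ε := by
    intro i
    have h1 : (c' i : ℝ) ≤ c₀ i * M := Int.floor_le _
    have h2 : c₀ i * M < c' i + 1 := Int.lt_floor_add_one _
    have he : (c' i : ℝ)/M - c₀ i = ((c' i : ℝ) - c₀ i * M) / M := by
      field_simp
    rw [he, abs_div, abs_of_pos hMpos, div_lt_iff₀ hMpos]
    have hle1 : |(c' i : ℝ) - c₀ i * M| ≤ 1 := by
      rw [abs_le]; constructor <;> linarith
    have h1M' : 1 < ε * (M:ℝ) := (div_lt_iff₀ hMpos).mp h1M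
    linarith
  have hdiff : ∀ y : Fin n → ℝ, (∀ i, |y i| ≤ 1) →
      |dotR (coeZ c') y / M - dotR c₀ y| ≤ n * ε := by
    intro y hy
    have : dotR (coeZ c') y / M - dotR c₀ y = ∑ i, ((c' i : ℝ)/M - c₀ i) * y i := by
      unfold dotR coeZ
      rw [Finset.sum_div]
      rw [← Finset.sum_sub_distrib]
      exact Finset.sum_congr rfl fun i _ => by ring
    rw [this]
    calc |∑ i, ((c' i : ℝ)/M - c₀ i) * y i| ≤ ∑ i, |((c' i : ℝ)/M - c₀ i) * y i| :=
          Finset.abs_sum_le_sum_abs _ _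
    _ ≤ ∑ _i : Fin n, ε := by
          apply Finset.sum_le_sum
          intro i _
          rw [abs_mul]
          calc |(c' i : ℝ)/M - c₀ i| * |y i| ≤ ε * 1 := by
                apply mul_le_mul (le_of_lt (happrox i)) (hy i) (abs_nonneg _) hε.le
          _ = ε := mul_one ε
    _ = n * ε := by simp [Finset.sum_const, mul_comm]
  -- strict separation by the integral functional c'
  have hsep : ∀ y ∈ V, dotR (coeZ c') y < dotR (coeZ c') xs := by
    intro y hyV
    have hy1 : ∀ i, |y i| ≤ 1 := hbdd y hyV.1
    have hx1 : ∀ i, |xs i| ≤ 1 := hbdd xs hxs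
    have h1 := hdiff y hy1
    have h2 := hdiff xs hx1
    have h3 : dotR c₀ y < s := by
      rw [← hfx]; exact hfs y (subset_convexHull ℝ V hyV)
    have h4 : dotR c₀ xs = f xs := (hfx xs).symm
    have hkey : 2 * ((n:ℝ) * ε) < gap := by
      have hn : (0:ℝ) ≤ n := Nat.cast_nonneg n
      have ht : ε * (2*(n:ℝ)+2) = gap := by
        rw [hεdef]; field_simp
      nlinarith
    have ha := (abs_le.mp h1).2
    have hb := (abs_le.mp h2).1
    have : dotR (coeZ c') y / M < dotR (coeZ c') xs / M := by
      have : f xs = gap + s := by rw [hgapdef]; ring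
      nlinarith
    have hmul := mul_lt_mul_of_pos_right this hMpos
    rwa [div_mul_cancel₀ _ (ne_of_gt hMpos), div_mul_cancel₀ _ (ne_of_gt hMpos)] at hmul
  -- integral point maximizing c' over Q
  obtain ⟨F, hFQ, hFGood, z, hFz, hFmax⟩ := face_step hQ c'
  obtain ⟨xb, hxbF, hxbint⟩ := good_has_int_point hFGood
  have hxbV : xb ∈ V := ⟨hFQ hxbF, hxbint⟩
  have h1 : dotR (coeZ c') xb < dotR (coeZ c') xs := hsep xb hxbV
  have h2 : dotR (coeZ c') xs ≤ z := hFmax xs hxs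
  have h3 : dotR (coeZ c') xb = z := hFz xb hxbF
  linarith

end BoxInt

/-- The characteristic cone of a box-integer polyhedron is generated by
vectors with entries in `{-1, 0, +1}`. -/
theorem charCone_boxInteger_generated {n : ℕ} (P : Set (Fin n → ℝ))
    (hP : IsPolyhedron P) (hbox : IsBoxInteger P) :
    ∃ (k : ℕ) (v : Fin k → (Fin n → ℝ)),
      (∀ j i, v j i = -1 ∨ v j i = 0 ∨ v j i = 1) ∧
      charCone P = {x | ∃ α : Fin k → ℝ, (∀ j, 0 ≤ α j) ∧ x = ∑ j, α j • v j} := by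
  classical
  obtain ⟨hne, m, A, b, hPeq⟩ := hP
  obtain ⟨w₀, hw₀⟩ := BoxInt.exists_intPt hbox hne
  have hCC : ∀ d, d ∈ charCone P ↔ A.mulVec d ≤ 0 :=
    BoxInt.mem_charCone_iff hPeq hw₀
  have hGood : BoxInt.Good (BoxInt.K A) :=
    ⟨BoxInt.K_compact A, ⟨0, BoxInt.K_zero_mem A⟩, fun c => BoxInt.key_base hPeq hbox hw₀ c⟩
  have hbdd : ∀ x ∈ BoxInt.K A, ∀ i, |x i| ≤ 1 := fun x hx => hx.2
  have hhull := BoxInt.subset_hull hGood hbdd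
  set gmap : (Fin n → Fin 3) → (Fin n → ℝ) := fun σ i => ((σ i : ℕ) : ℝ) - 1 with hgmap
  have hginj : Function.Injective gmap := by
    intro σ σ' h
    funext i
    have h1 := congrFun h i
    simp only [hgmap] at h1
    have h2 : ((σ i : ℕ) : ℝ) = ((σ' i : ℕ) : ℝ) := by linarith
    have h3 : (σ i : ℕ) = (σ' i : ℕ) := Nat.cast_injective h2
    exact Fin.ext h3
  have hgval : ∀ σ i, gmap σ i = -1 ∨ gmap σ i = 0 ∨ gmap σ i = 1 := by
    intro σ i
    simp only [hgmap]
    have h3 : (σ i : ℕ) < 3 := (σ i).isLt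
    set a := (σ i : ℕ) with ha
    interval_cases a <;> norm_num
  set S : Finset (Fin n → Fin 3) := Finset.univ.filter (fun σ => gmap σ ∈ charCone P) with hS
  set k := S.card with hk
  set eqv := S.equivFin with heqv
  set v : Fin k → (Fin n → ℝ) := fun j => gmap (eqv.symm j) with hv
  have hvmem : ∀ j, ((eqv.symm j : {x // x ∈ S}) : Fin n → Fin 3) ∈ S := fun j => (eqv.symm j).2
  have hvC : ∀ j, A.mulVec (v j) ≤ 0 := by
    intro j
    have h := hvmem j
    simp only [hS, Finset.mem_filter] at h
    exact (hCC _).mp h.2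
  refine ⟨k, v, fun j i => hgval _ i, ?_⟩
  ext d
  constructor
  · intro hd
    by_cases hd0 : d = 0
    · exact ⟨0, fun j => le_rfl, by simp [hd0]⟩
    obtain ⟨i₀, hi₀⟩ : ∃ i, d i ≠ 0 := by
      by_contra h
      push_neg at h
      exact hd0 (funext h)
    set t : ℝ := Finset.univ.sup' ⟨i₀, Finset.mem_univ i₀⟩ (fun i => |d i|) with htdef
    have htpos : 0 < t := lt_of_lt_of_le (abs_pos.mpr hi₀)
      (Finset.le_sup' (fun i => |d i|) (Finset.mem_univ i₀))
    have htle : ∀ i, |d i| ≤ t := fun i => Finset.le_sup' (fun i => |d i|) (Finset.mem_univ i)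
    set d' : Fin n → ℝ := t⁻¹ • d with hd'def
    have hd'K : d' ∈ BoxInt.K A := by
      constructor
      · intro i2
        rw [hd'def, Matrix.mulVec_smul]
        have h5 := (hCC d).mp hd i2
        simp only [Pi.smul_apply, smul_eq_mul, Pi.zero_apply] at h5 ⊢
        exact mul_nonpos_of_nonneg_of_nonpos (inv_nonneg.mpr htpos.le) h5
      · intro i
        rw [hd'def]
        simp only [Pi.smul_apply, smul_eq_mul, abs_mul, abs_inv, abs_of_pos htpos]
        have hmul := mul_le_mul_of_nonneg_left (htle i) (inv_nonneg.mpr htpos.le)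
        rw [inv_mul_cancel₀ (ne_of_gt htpos)] at hmul
        exact hmul
    have hd'hull := hhull hd'K
    have hVeq : {x ∈ BoxInt.K A | ∀ i, ∃ z : ℤ, x i = (z:ℝ)} = ↑(S.image gmap) := by
      ext x
      simp only [Finset.coe_image, Set.mem_image, Finset.mem_coe, Set.mem_setOf_eq]
      constructor
      · rintro ⟨hxK, hxint⟩
        have hσ : ∀ i, ∃ c : Fin 3, ((c : ℕ) : ℝ) - 1 = x i := by
          intro i
          obtain ⟨z, hz⟩ := hxint i
          have hb := hxK.2 i
          rw [hz] at hb
          have hz1 : -1 ≤ z ∧ z ≤ 1 := by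
            constructor
            · exact_mod_cast (abs_le.mp hb).1
            · exact_mod_cast (abs_le.mp hb).2
          refine ⟨⟨(z+1).toNat, by omega⟩, ?_⟩
          have hzz : ((z+1).toNat : ℤ) = z + 1 := Int.toNat_of_nonneg (by omega)
          have hc : (((z+1).toNat : ℕ) : ℝ) = (z : ℝ) + 1 := by
            exact_mod_cast congrArg (Int.cast : ℤ → ℝ) hzz
          show (((z+1).toNat : ℕ) : ℝ) - 1 = x i
          rw [hc, hz]; ring
        refine ⟨fun i => (hσ i).choose, ?_, ?_⟩
        · simp only [hS, Finset.mem_filter]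
          refine ⟨Finset.mem_univ _, ?_⟩
          have hgx : gmap (fun i => (hσ i).choose) = x := by
            funext i; exact (hσ i).choose_spec
          rw [hgx, hCC]
          exact hxK.1
        · funext i; exact (hσ i).choose_spec
      · rintro ⟨σ, hσS, rfl⟩
        refine ⟨⟨?_, ?_⟩, ?_⟩
        · simp only [hS, Finset.mem_filter] at hσS
          exact (hCC _).mp hσS.2
        · intro i; rcases hgval σ i with h|h|h <;> rw [h] <;> norm_num
        · intro i
          rcases hgval σ i with h|h|h
          · exact ⟨-1, by rw [h]; norm_num⟩
          · exact ⟨0, by rw [h]; norm_num⟩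
          · exact ⟨1, by rw [h]; norm_num⟩
    rw [hVeq, Finset.convexHull_eq] at hd'hull
    obtain ⟨wgt, hwgt0, hwgt1, hwc⟩ := hd'hull
    refine ⟨fun j => t * wgt (v j), fun j => mul_nonneg htpos.le
      (hwgt0 _ (Finset.mem_image_of_mem gmap (hvmem j))), ?_⟩
    have hcm : (S.image gmap).centerMass wgt id = ∑ y ∈ S.image gmap, wgt y • y := by
      rw [Finset.centerMass_eq_of_sum_1 _ id hwgt1]
      simp
    have hsum1 : ∑ y ∈ S.image gmap, wgt y • y = ∑ σ ∈ S, wgt (gmap σ) • gmap σ :=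
      Finset.sum_image (fun a _ a' _ h => hginj h)
    have hsum2 : ∑ σ ∈ S, wgt (gmap σ) • gmap σ = ∑ j : Fin k, wgt (v j) • v j := by
      rw [← Finset.sum_coe_sort S (fun σ => wgt (gmap σ) • gmap σ)]
      rw [← Equiv.sum_comp eqv.symm
        (fun x : {σ // σ ∈ S} => wgt (gmap (x : Fin n → Fin 3)) • gmap (x : Fin n → Fin 3))]
    have hd'eq : d' = ∑ j : Fin k, wgt (v j) • v j := by rw [← hwc, hcm, hsum1, hsum2]
    have hds : d = t • d' := by
      rw [hd'def, smul_smul, mul_inv_cancel₀ (ne_of_gt htpos), one_smul]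
    rw [hds, hd'eq, Finset.smul_sum]
    refine Finset.sum_congr rfl fun j _ => ?_
    show t • wgt (v j) • v j = (t * wgt (v j)) • v j
    rw [smul_smul]
  · rintro ⟨α, hα, rfl⟩
    rw [hCC]
    intro i
    have hmv : A.mulVec (∑ j, α j • v j) = ∑ j, α j • A.mulVec (v j) := by
      rw [← Matrix.mulVecLin_apply, map_sum]
      simp only [map_smul, Matrix.mulVecLin_apply]
    rw [hmv]
    simp only [Finset.sum_apply, Pi.smul_apply, smul_eq_mul, Pi.zero_apply]
    exact Finset.sum_nonpos fun j _ => mul_nonpos_of_nonneg_of_nonpos (hα j) (hvC j i)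
end
end

section
/- The characteristic cone of a box-integer polyhedron P ⊆ ℝ^n is itself a box-integer polyhedron. -/
open Set Pointwise

noncomputable section

/-!
Write `P = {x | A x ≤ b}`, so that its characteristic cone is `C = {d | A d ≤ 0}`, and let `B` be an
integral box. By Krein–Milman it suffices that every extreme point `v` of `C ∩ B` is integral.
Weighting the constraints tight at `v` by generic positive weights gives a functional `c`, maximised
over `C ∩ B` at `v`, that takes the value `c v` at no integral point of `B` other than `v`. Starting
from an integral point of `P`, box-integrality of `P ∩ (z + B)` lets one step repeatedly by integral
vectors `e ∈ B` with `c e ≥ c v`; after `k` steps the average step lies within `O(1/k)` of `C`, so a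
convex combination of such `e` lies in `C ∩ B`. Maximality of `c` at `v` then forces `c e = c v` for
one of them, hence `e = v`.
-/

open Matrix Filter Topology Polynomial

theorem exists_pos_weights_forall_sum_mul_eq_zero {ι : Type*} [Fintype ι] {s : Set (ι → ℝ)}
    (hs : s.Finite) :
    ∃ τ : ι → ℝ, (∀ k, 0 < τ k) ∧ ∀ a ∈ s, ∑ k, τ k * a k = 0 → a = 0 := by
  classical
  let π := Fintype.equivFin ι
  let p : (ι → ℝ) → ℝ[X] := fun a => ofFn (Fintype.card ι) (a ∘ π.symm)
  have hp : ∀ a, p a = 0 → a = 0 := fun a ha => by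
    have : a ∘ π.symm = 0 := injective_ofFn (Fintype.card ι) (ha.trans (ofFn_zero _).symm)
    funext k
    simpa using congrFun this (π k)
  have heval : ∀ a t, (p a).eval t = ∑ k, t ^ (π k : ℕ) * a k := fun a t => by
    simp only [p, ofFn_eq_sum_monomial, eval_finsetSum, eval_monomial, Function.comp_apply]
    rw [← π.symm.sum_comp]
    simp [mul_comm]
  have hbad : (⋃ a ∈ s \ {0}, {t | (p a).IsRoot t}).Finite :=
    hs.sdiff.biUnion fun a ha => finite_setOfPred_isRoot fun h => ha.2 (hp a h)
  obtain ⟨t, ht0, ht⟩ := ((Ioi_infinite (0 : ℝ)).sdiff hbad).nonempty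
  refine ⟨fun k => t ^ (π k : ℕ), fun k => pow_pos ht0 _, fun a ha hsum => ?_⟩
  by_contra ha0
  exact ht (mem_biUnion ⟨ha, ha0⟩ (by simp [IsRoot, heval, hsum]))

section SetOfMulVecLe

variable {ι κ : Type*} [Fintype ι] {G : Matrix κ ι ℝ} {h : κ → ℝ}

theorem convex_setOf_mulVec_le : Convex ℝ {x | G *ᵥ x ≤ h} :=
  (convex_Iic h).linear_preimage G.mulVecLin

theorem isClosed_setOf_mulVec_le : IsClosed {x | G *ᵥ x ≤ h} :=
  isClosed_le (continuous_const.matrix_mulVec continuous_id) continuous_const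

theorem eventually_add_smul_mem_setOf_mulVec_le [Finite κ] {v w : ι → ℝ} (hv : G *ᵥ v ≤ h)
    (hw : ∀ k, (G *ᵥ v) k = h k → (G *ᵥ w) k = 0) :
    ∀ᶠ s in 𝓝 (0 : ℝ), G *ᵥ (v + s • w) ≤ h := by
  simp only [Pi.le_def, mulVec_add, mulVec_smul, Pi.add_apply, Pi.smul_apply, smul_eq_mul]
  refine eventually_all.2 fun k => ?_
  rcases (hv k).lt_or_eq with hlt | heq
  · have hcont : Continuous fun s : ℝ => (G *ᵥ v) k + s * (G *ᵥ w) k := by fun_prop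
    exact (hcont.tendsto' 0 _ (by simp)).eventually (gt_mem_nhds hlt) |>.mono fun _ => le_of_lt
  · exact .of_forall fun s => by simp [hw k heq, heq]

theorem eq_zero_of_mem_extremePoints_setOf_mulVec_le [Finite κ] {v w : ι → ℝ}
    (hv : v ∈ extremePoints ℝ {x | G *ᵥ x ≤ h})
    (hw : ∀ k, (G *ᵥ v) k = h k → (G *ᵥ w) k = 0) : w = 0 := by
  have hw' : ∀ k, (G *ᵥ v) k = h k → (G *ᵥ -w) k = 0 := fun k hk => by
    simp [mulVec_neg, hw k hk]
  obtain ⟨s, ⟨hsw, hsw'⟩, hs⟩ := ((eventually_add_smul_mem_setOf_mulVec_le hv.1 hw).and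
    (eventually_add_smul_mem_setOf_mulVec_le hv.1 hw') |>.filter_mono nhdsWithin_le_nhds |>.and
    (self_mem_nhdsWithin (s := Ioi 0))).exists
  have hmid : v ∈ openSegment ℝ (v + s • w) (v + s • -w) :=
    ⟨1 / 2, 1 / 2, by norm_num, by norm_num, by norm_num, by module⟩
  have := hv.2 hsw hsw' hmid
  simpa [hs.ne'] using this

theorem exists_isMaxOn_forall_eq_of_mem_extremePoints [Fintype κ] {v : ι → ℝ}
    (hv : v ∈ extremePoints ℝ {x | G *ᵥ x ≤ h}) {E : Set (ι → ℝ)} (hE : E.Finite) :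
    ∃ c : (ι → ℝ) →ₗ[ℝ] ℝ, IsMaxOn c {x | G *ᵥ x ≤ h} v ∧ ∀ e ∈ E, c e = c v → e = v := by
  classical
  let slack : (ι → ℝ) → κ → ℝ := fun x k => if (G *ᵥ v) k = h k then (G *ᵥ x) k - h k else 0
  obtain ⟨τ, hτ, hgen⟩ := exists_pos_weights_forall_sum_mul_eq_zero (hE.image slack)
  let c := dotProductBilin ℝ ℝ (fun k => if (G *ᵥ v) k = h k then τ k else 0) ∘ₗ G.mulVecLin
  have hc : ∀ x, c x - c v = ∑ k, τ k * slack x k := fun x => by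
    rw [← map_sub]
    simp only [c, slack, LinearMap.comp_apply, dotProductBilin_apply_apply,
      mulVecLin_apply, mulVec_sub, dotProduct, Pi.sub_apply]
    refine Finset.sum_congr rfl fun k _ => ?_
    split_ifs with hk <;> simp [hk]
  refine ⟨c, fun x hx => ?_, fun e he hce => ?_⟩
  · have : ∑ k, τ k * slack x k ≤ 0 := Finset.sum_nonpos fun k _ =>
      mul_nonpos_of_nonneg_of_nonpos (hτ k).le (by
        simp only [slack]; split_ifs <;> linarith [(hx : G *ᵥ x ≤ h) k])
    show c x ≤ c v
    linarith [hc x]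
  · have hslack := hgen _ (mem_image_of_mem slack he) (by rw [← hc, hce, sub_self])
    refine sub_eq_zero.mp (eq_zero_of_mem_extremePoints_setOf_mulVec_le hv fun k hk => ?_)
    have := congrFun hslack k
    simp only [slack, hk, if_true, Pi.zero_apply, sub_eq_zero] at this
    simp [mulVec_sub, this, hk]

end SetOfMulVecLe

section Box

variable {n : ℕ}

theorem intPts_mono {s t : Set (Fin n → ℝ)} (hst : s ⊆ t) : intPts s ⊆ intPts t :=
  fun _ hx => ⟨hst hx.1, hx.2⟩

theorem intBox_eq_Icc (l u : Fin n → ℤ) : intBox l u = Icc (coeZ l) (coeZ u) := by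
  ext x
  simp [intBox, coeZ, Pi.le_def, forall_and]

theorem convex_intBox (l u : Fin n → ℤ) : Convex ℝ (intBox l u) := by
  rw [intBox_eq_Icc]
  exact convex_Icc _ _

theorem isCompact_intBox (l u : Fin n → ℤ) : IsCompact (intBox l u) := by
  rw [intBox_eq_Icc]
  exact isCompact_Icc

theorem finite_intPts_intBox (l u : Fin n → ℤ) : (intPts (intBox l u)).Finite := by
  refine ((finite_Icc l u).image coeZ).subset fun x ⟨hxB, hxZ⟩ => ?_
  choose z hz using hxZ
  refine ⟨z, ⟨fun i => ?_, fun i => ?_⟩, funext fun i => (hz i).symm⟩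
  · exact_mod_cast hz i ▸ (hxB i).1
  · exact_mod_cast hz i ▸ (hxB i).2

theorem coeZ_add_mem_intBox_add_iff (z l u : Fin n → ℤ) (x : Fin n → ℝ) :
    coeZ z + x ∈ intBox (z + l) (z + u) ↔ x ∈ intBox l u := by
  simp [intBox, coeZ]

end Box

namespace IsBoxInteger

variable {n : ℕ} {P : Set (Fin n → ℝ)}

theorem intPts_nonempty (hbox : IsBoxInteger P) (hP : P.Nonempty) : (intPts P).Nonempty := by
  obtain ⟨x, hx⟩ := hP
  have hxB : x ∈ intBox (fun i => ⌊x i⌋) (fun i => ⌈x i⌉) :=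
    fun i => ⟨Int.floor_le _, Int.le_ceil _⟩
  have hne : (P ∩ intBox _ _).Nonempty := ⟨x, hx, hxB⟩
  rw [hbox _ _ (fun i => Int.floor_le_ceil _) hne, convexHull_nonempty_iff] at hne
  exact hne.mono (intPts_mono inter_subset_left)

theorem exists_intPts_sub_mem (hbox : IsBoxInteger P) {x v : Fin n → ℝ} (hx : x ∈ intPts P)
    (hxv : x + v ∈ P) {l u : Fin n → ℤ} (hv : v ∈ intBox l u) (c : (Fin n → ℝ) →ₗ[ℝ] ℝ) :
    ∃ x' ∈ intPts P, x' - x ∈ intPts (intBox l u) ∧ c v ≤ c (x' - x) := by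
  choose z hz using hx.2
  obtain rfl : x = coeZ z := funext hz
  have hlu : l ≤ u := fun i => by exact_mod_cast (hv i).1.trans (hv i).2
  have hxvB := (coeZ_add_mem_intBox_add_iff z l u v).2 hv
  have hhull : coeZ z + v ∈ P ∩ intBox (z + l) (z + u) := ⟨hxv, hxvB⟩
  rw [hbox _ _ (add_le_add le_rfl hlu) ⟨_, hhull⟩] at hhull
  obtain ⟨y, ⟨⟨hyP, hyB⟩, hyZ⟩, hcy⟩ :=
    (c.convexOn (convex_convexHull ℝ _)).exists_ge_of_mem_convexHull (subset_convexHull ℝ _) hhull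
  refine ⟨y, ⟨hyP, hyZ⟩, ⟨?_, fun i => ?_⟩, ?_⟩
  · rw [← coeZ_add_mem_intBox_add_iff z]
    simpa using hyB
  · obtain ⟨k, hk⟩ := hyZ i
    exact ⟨k - z i, by simp [hk, coeZ]⟩
  · rw [map_add] at hcy
    linarith [map_sub c y (coeZ z)]

theorem exists_intPts_sub_mem_smul_convexHull (hbox : IsBoxInteger P) {x₀ v : Fin n → ℝ}
    (hx₀ : x₀ ∈ intPts P) (hv : v ∈ charCone P) {l u : Fin n → ℤ} (hvB : v ∈ intBox l u)
    (c : (Fin n → ℝ) →ₗ[ℝ] ℝ) (k : ℕ) :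
    ∃ x ∈ intPts P, x - x₀ ∈
      ((k : ℝ) + 1) • convexHull ℝ {e ∈ intPts (intBox l u) | c v ≤ c e} := by
  have hE {e} (he : e ∈ intPts (intBox l u)) (hce : c v ≤ c e) :
      e ∈ convexHull ℝ {e ∈ intPts (intBox l u) | c v ≤ c e} :=
    subset_convexHull ℝ _ ⟨he, hce⟩
  induction k with
  | zero =>
    obtain ⟨x, hx, he, hce⟩ := hbox.exists_intPts_sub_mem hx₀ (hv x₀ hx₀.1) hvB c
    exact ⟨x, hx, by simpa using hE he hce⟩
  | succ k ih =>
    obtain ⟨x, hx, hxS⟩ := ih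
    obtain ⟨x', hx', he, hce⟩ := hbox.exists_intPts_sub_mem hx (hv x hx.1) hvB c
    refine ⟨x', hx', ?_⟩
    rw [Nat.cast_succ, (convex_convexHull ℝ _).add_smul (by positivity) zero_le_one, one_smul]
    rw [show x' - x₀ = (x - x₀) + (x' - x) by abel]
    exact add_mem_add hxS (hE he hce)

end IsBoxInteger

section CharCone

variable {n m : ℕ} {A : Matrix (Fin m) (Fin n) ℝ} {b : Fin m → ℝ}

theorem charCone_setOf_mulVec_le (hne : {x | A *ᵥ x ≤ b}.Nonempty) :
    charCone {x | A *ᵥ x ≤ b} = {d | A *ᵥ d ≤ 0} := by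
  obtain ⟨x₀, hx₀⟩ := hne
  ext d
  refine ⟨fun hd i => ?_, fun (hd : A *ᵥ d ≤ 0) x (hx : A *ᵥ x ≤ b) => ?_⟩
  · have hk : ∀ k : ℕ, A *ᵥ (x₀ + (k : ℝ) • d) ≤ b := fun k => by
      induction k with
      | zero => simpa using hx₀
      | succ k ih => simpa [add_smul, ← add_assoc] using hd _ ih
    by_contra! hpos
    obtain ⟨k, hk'⟩ := exists_nat_gt ((b i - (A *ᵥ x₀) i) / (A *ᵥ d) i)
    have := hk k i
    simp only [mulVec_add, mulVec_smul, Pi.add_apply, Pi.smul_apply, smul_eq_mul] at this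
    rw [div_lt_iff₀ hpos] at hk'
    linarith
  · simpa [mulVec_add] using add_le_add hx hd

theorem exists_mem_inter_setOf_mulVec_nonpos {S : Set (Fin n → ℝ)} (hS : IsCompact S)
    {x₀ : Fin n → ℝ} (h : ∀ k : ℕ, ∃ x, A *ᵥ x ≤ b ∧ x - x₀ ∈ ((k : ℝ) + 1) • S) :
    (S ∩ {d | A *ᵥ d ≤ 0}).Nonempty := by
  choose x hxP y hyS hy using h
  have hbound (k : ℕ) (i : Fin m) :
      (A *ᵥ y k) i ≤ (b i - (A *ᵥ x₀) i) * (1 / ((k : ℝ) + 1)) := by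
    have h1 := congrArg (fun z => (A *ᵥ z) i) (hy k)
    simp only [mulVec_smul, mulVec_sub, Pi.smul_apply, Pi.sub_apply, smul_eq_mul] at h1
    rw [mul_one_div, le_div_iff₀ (by positivity)]
    linarith [hxP k i]
  obtain ⟨d, hdS, φ, hφ, hlim⟩ := hS.tendsto_subseq hyS
  refine ⟨d, hdS, fun i => ?_⟩
  have hr := (tendsto_one_div_add_atTop_nhds_zero_nat.comp hφ.tendsto_atTop).const_mul
    (b i - (A *ᵥ x₀) i)
  rw [mul_zero] at hr
  have hcont : Continuous fun z => (A *ᵥ z) i :=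
    (continuous_apply i).comp (continuous_const.matrix_mulVec continuous_id)
  exact le_of_tendsto_of_tendsto' ((hcont.tendsto d).comp hlim) hr fun k => hbound (φ k) i

theorem setOf_mulVec_nonpos_inter_intBox (A : Matrix (Fin m) (Fin n) ℝ) (l u : Fin n → ℤ) :
    {d | A *ᵥ d ≤ 0} ∩ intBox l u =
      {x | fromRows A (fromRows 1 (-1)) *ᵥ x ≤
        Sum.elim (0 : Fin m → ℝ) (Sum.elim (coeZ u) (-coeZ l))} := by
  ext x
  simp [fromRows_mulVec, neg_mulVec, Pi.le_def, intBox, coeZ, forall_and, and_comm]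

end CharCone

section BoxInteger

variable {n m : ℕ} {A : Matrix (Fin m) (Fin n) ℝ} {b : Fin m → ℝ}

theorem exists_intPts_intBox_eq_of_isMaxOn (hne : {x | A *ᵥ x ≤ b}.Nonempty)
    (hbox : IsBoxInteger {x | A *ᵥ x ≤ b}) {l u : Fin n → ℤ} {v : Fin n → ℝ}
    (hv : v ∈ {d | A *ᵥ d ≤ 0} ∩ intBox l u) (c : (Fin n → ℝ) →ₗ[ℝ] ℝ)
    (hmax : IsMaxOn c ({d | A *ᵥ d ≤ 0} ∩ intBox l u) v) :
    ∃ e ∈ intPts (intBox l u), c e = c v := by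
  set E := {e ∈ intPts (intBox l u) | c v ≤ c e}
  have hE : E.Finite := (finite_intPts_intBox l u).subset (sep_subset _ _)
  obtain ⟨x₀, hx₀⟩ := hbox.intPts_nonempty hne
  have hvC : v ∈ charCone {x | A *ᵥ x ≤ b} := (charCone_setOf_mulVec_le hne).symm ▸ hv.1
  obtain ⟨d, hdS, hdC⟩ := exists_mem_inter_setOf_mulVec_nonpos (hE.isCompact_convexHull ℝ)
    fun k => (hbox.exists_intPts_sub_mem_smul_convexHull hx₀ hvC hv.2 c k).imp
      fun _ hx => ⟨hx.1.1, hx.2⟩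
  have hdB : d ∈ intBox l u := convexHull_min (fun e he => he.1.1) (convex_intBox l u) hdS
  obtain ⟨e, he, hed⟩ := (c.concaveOn (convex_convexHull ℝ E)).exists_le_of_mem_convexHull
    (subset_convexHull ℝ E) hdS
  exact ⟨e, he.1, le_antisymm (hed.trans (hmax ⟨hdC, hdB⟩)) he.2⟩

theorem mem_intPts_of_mem_extremePoints (hne : {x | A *ᵥ x ≤ b}.Nonempty)
    (hbox : IsBoxInteger {x | A *ᵥ x ≤ b}) {l u : Fin n → ℤ} {v : Fin n → ℝ}
    (hv : v ∈ extremePoints ℝ ({d | A *ᵥ d ≤ 0} ∩ intBox l u)) :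
    v ∈ intPts ({d | A *ᵥ d ≤ 0} ∩ intBox l u) := by
  rw [setOf_mulVec_nonpos_inter_intBox] at hv
  obtain ⟨c, hmax, huniq⟩ :=
    exists_isMaxOn_forall_eq_of_mem_extremePoints hv (finite_intPts_intBox l u)
  rw [← setOf_mulVec_nonpos_inter_intBox] at hv hmax
  obtain ⟨e, he, hce⟩ := exists_intPts_intBox_eq_of_isMaxOn hne hbox hv.1 c hmax
  obtain rfl := huniq e he hce
  exact ⟨hv.1, he.2⟩

end BoxInteger

theorem eq_convexHull_intPts_of_extremePoints_subset {n : ℕ} {K : Set (Fin n → ℝ)}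
    {l u : Fin n → ℤ} (hKB : K ⊆ intBox l u) (hK : IsCompact K) (hKc : Convex ℝ K)
    (hext : K.extremePoints ℝ ⊆ intPts K) : K = convexHull ℝ (intPts K) := by
  have hfin : (intPts K).Finite := (finite_intPts_intBox l u).subset (intPts_mono hKB)
  refine subset_antisymm ?_ (convexHull_min (sep_subset _ _) hKc)
  calc K = closure (convexHull ℝ (K.extremePoints ℝ)) :=
        (closure_convexHull_extremePoints hK hKc).symm
    _ ⊆ closure (convexHull ℝ (intPts K)) := closure_mono (convexHull_mono hext)
    _ = convexHull ℝ (intPts K) := (hfin.isClosed_convexHull ℝ).closure_eq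

/-- The characteristic cone of a box-integer polyhedron is itself a
box-integer polyhedron. -/
theorem charCone_boxInteger {n : ℕ} (P : Set (Fin n → ℝ))
    (hP : IsPolyhedron P) (hbox : IsBoxInteger P) :
    IsPolyhedron (charCone P) ∧ IsBoxInteger (charCone P) := by
  obtain ⟨hne, m, A, b, rfl⟩ := hP
  rw [charCone_setOf_mulVec_le hne]
  refine ⟨⟨⟨0, by simp⟩, m, A, 0, rfl⟩, fun l u _ _ => ?_⟩
  refine eq_convexHull_intPts_of_extremePoints_subset inter_subset_right ?_ ?_
    fun v hv => mem_intPts_of_mem_extremePoints hne hbox hv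
  · exact (isCompact_intBox l u).inter_left isClosed_setOf_mulVec_le
  · exact setOf_mulVec_nonpos_inter_intBox A l u ▸ convex_setOf_mulVec_le
end
end

section
/- If P ⊆ ℝ^n is a box-integer polyhedron, then P ∩ ℤ^n is an integrally convex set and P equals the convex hull of P ∩ ℤ^n. -/
open Set Pointwise

noncomputable section

lemma polyhedron_convex' {n : ℕ} {P : Set (Fin n → ℝ)} (hP : IsPolyhedron P) :
    Convex ℝ P := by
  obtain ⟨-, m, A, b, rfl⟩ := hP
  intro x hx y hy a c ha hc hac i
  have hx' := hx i
  have hy' := hy i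
  simp only [Set.mem_setOf_eq, Matrix.mulVec_add, Matrix.mulVec_smul, Pi.add_apply,
    Pi.smul_apply, smul_eq_mul] at *
  calc a * A.mulVec x i + c * A.mulVec y i
      ≤ a * b i + c * b i := by
        exact add_le_add (mul_le_mul_of_nonneg_left hx' ha) (mul_le_mul_of_nonneg_left hy' hc)
    _ = b i := by rw [← add_mul, hac, one_mul]

lemma mem_convZ_nbhd' {n : ℕ} {P : Set (Fin n → ℝ)} (hbox : IsBoxInteger P)
    {x : Fin n → ℝ} (hx : x ∈ P) :
    x ∈ convZ ({z : Fin n → ℤ | coeZ z ∈ P} ∩ intNbhd x) := by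
  set l : Fin n → ℤ := fun i => ⌊x i⌋ with hl
  set u : Fin n → ℤ := fun i => ⌈x i⌉ with hu
  have hlu : l ≤ u := fun i => Int.floor_le_ceil _
  have hxbox : x ∈ intBox l u := fun i => ⟨Int.floor_le _, Int.le_ceil _⟩
  have hne : (P ∩ intBox l u).Nonempty := ⟨x, hx, hxbox⟩
  have h := hbox l u hlu hne
  have hx' : x ∈ convexHull ℝ (intPts (P ∩ intBox l u)) := h ▸ ⟨hx, hxbox⟩
  show x ∈ convexHull ℝ (coeZ '' _)
  refine convexHull_mono ?_ hx'
  rintro y ⟨⟨hyP, hybox⟩, hyint⟩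
  choose z hz using hyint
  have hcz : coeZ z = y := funext fun i => (hz i).symm
  refine ⟨z, ⟨?_, ?_⟩, hcz⟩
  · show coeZ z ∈ P; rw [hcz]; exact hyP
  · intro i
    have h1 : (l i : ℝ) ≤ y i := (hybox i).1
    have h2 : y i ≤ (u i : ℝ) := (hybox i).2
    have h3 : x i < (l i : ℝ) + 1 := Int.lt_floor_add_one _
    have h4 : (u i : ℝ) < x i + 1 := Int.ceil_lt_add_one _
    have h5 : (z i : ℝ) = y i := (hz i).symm
    rw [abs_sub_lt_iff]
    constructor <;> linarith

/-- If `P ⊆ ℝ^n` is a box-integer polyhedron, then `P ∩ ℤ^n` is an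
integrally convex set and `P` is the convex hull of `P ∩ ℤ^n`. -/
theorem boxInteger_intPoints_integrallyConvex {n : ℕ} (P : Set (Fin n → ℝ))
    (hP : IsPolyhedron P) (hbox : IsBoxInteger P) :
    IntegrallyConvex {z : Fin n → ℤ | coeZ z ∈ P} ∧
    P = convZ {z : Fin n → ℤ | coeZ z ∈ P} := by
  have hconv : Convex ℝ P := polyhedron_convex' hP
  set S : Set (Fin n → ℤ) := {z : Fin n → ℤ | coeZ z ∈ P} with hS
  have hsub : convZ S ⊆ P := by
    apply convexHull_min _ hconv
    rintro y ⟨z, hz, rfl⟩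
    exact hz
  have hPsub : P ⊆ convZ S := by
    intro x hx
    have := mem_convZ_nbhd' hbox hx
    exact convexHull_mono (Set.image_mono (Set.inter_subset_left)) this
  have hPeq : P = convZ S := Subset.antisymm hPsub hsub
  refine ⟨⟨?_, ?_⟩, hPeq⟩
  · obtain ⟨x, hx⟩ := hP.1
    have := mem_convZ_nbhd' hbox hx
    have hne : (coeZ '' (S ∩ intNbhd x)).Nonempty := by
      by_contra hemp
      rw [Set.not_nonempty_iff_eq_empty] at hemp
      rw [convZ, hemp, convexHull_empty] at this
      exact this
    obtain ⟨y, z, hz, rfl⟩ := hne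
    exact ⟨z, hz.1⟩
  · intro x hx
    exact mem_convZ_nbhd' hbox (hsub hx)
end
end

section
/- Let S ⊆ ℤ^n be an integrally convex set. Then the characteristic cone C of its convex hull conv(S) is generated by vectors in {−1,0,+1}^n, i.e., C is the set of all finite nonnegative linear combinations of some vectors in {−1,0,+1}^n; in particular, C is an integer polyhedron (C equals the convex hull of the integer points it contains). -/
open Set Pointwise

noncomputable section

section CCaux

variable {n : ℕ}

/-- dot product -/
def dot (c x : Fin n → ℝ) : ℝ := ∑ i, c i * x i

lemma dot_add (c x y : Fin n → ℝ) : dot c (x + y) = dot c x + dot c y := by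
  simp [dot, mul_add, Finset.sum_add_distrib]

lemma dot_sub (c x y : Fin n → ℝ) : dot c (x - y) = dot c x - dot c y := by
  simp [dot, mul_sub, Finset.sum_sub_distrib]

lemma dot_smul (c : Fin n → ℝ) (a : ℝ) (x : Fin n → ℝ) : dot c (a • x) = a * dot c x := by
  simp only [dot, Pi.smul_apply, smul_eq_mul, Finset.mul_sum]
  exact Finset.sum_congr rfl (fun i _ => by ring)

lemma continuous_dot (c : Fin n → ℝ) : Continuous (dot c) := by
  unfold dot
  exact continuous_finset_sum _ (fun i _ => (continuous_const.mul (continuous_apply i)))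

lemma coeZ_add (a b : Fin n → ℤ) : coeZ (a + b) = coeZ a + coeZ b := by
  funext i; simp only [coeZ, Pi.add_apply]; push_cast; ring

/-- finiteness of integer vectors in a box -/
lemma finite_int_box (x : Fin n → ℝ) (R : ℝ) :
    {z : Fin n → ℤ | ∀ i, |x i - (z i : ℝ)| ≤ R}.Finite := by
  have h : {z : Fin n → ℤ | ∀ i, |x i - (z i : ℝ)| ≤ R} ⊆
      Set.univ.pi (fun i => {m : ℤ | |x i - (m : ℝ)| ≤ R}) := by
    intro z hz i _; exact hz i
  refine Set.Finite.subset (Set.Finite.pi (fun i => ?_)) h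
  have : {m : ℤ | |x i - (m : ℝ)| ≤ R} ⊆ Set.Icc ⌈x i - R⌉ ⌊x i + R⌋ := by
    intro m hm
    simp only [mem_setOf_eq, abs_le] at hm
    constructor
    · exact Int.ceil_le.2 (by linarith [hm.2])
    · exact Int.le_floor.2 (by linarith [hm.1])
  exact (Set.finite_Icc _ _).subset this

variable {S : Set (Fin n → ℤ)}

/-- Key closedness: the convex hull of an integrally convex set is closed. -/
lemma closed_convZ (hS : IntegrallyConvex S) : IsClosed (convZ S) := by
  rw [← closure_subset_iff_isClosed]
  intro x hx
  rcases mem_closure_iff_seq_limit.1 hx with ⟨q, hq, hqx⟩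
  -- find k with dist small
  have h2 : ∃ k, ∀ i, |q k i - x i| < 1/2 := by
    have := Metric.tendsto_atTop.1 hqx (1/2) (by norm_num)
    rcases this with ⟨N, hN⟩
    refine ⟨N, fun i => ?_⟩
    have h1 := hN N le_rfl
    have : dist (q N i) (x i) ≤ dist (q N) x := dist_le_pi_dist _ _ i
    rw [Real.dist_eq] at this
    linarith
  rcases h2 with ⟨k0, hk0⟩
  -- all far terms lie in the hull of a fixed finite set
  set F : Set (Fin n → ℤ) := S ∩ {z | ∀ i, |x i - (z i : ℝ)| ≤ 3/2} with hF
  have hFfin : F.Finite := (finite_int_box x (3/2)).subset (inter_subset_right)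
  set K : Set (Fin n → ℝ) := convexHull ℝ (coeZ '' F) with hK
  have hKclosed : IsClosed K := (hFfin.image coeZ).isClosed_convexHull (𝕜 := ℝ)
  have h3 : ∀ m : ℕ, (∀ i, |q m i - x i| < 1/2) → q m ∈ K := by
    intro m hm
    have hq' := hS.2 (q m) (hq m)
    refine convexHull_mono ?_ hq'
    intro p hp
    rcases hp with ⟨z, ⟨hzS, hzN⟩, rfl⟩
    refine ⟨z, ⟨hzS, ?_⟩, rfl⟩
    intro i
    have := hzN i
    have h1 := hm i
    rw [abs_sub_comm] at h1
    calc |x i - (z i : ℝ)| ≤ |x i - q m i| + |q m i - (z i : ℝ)| := abs_sub_le _ _ _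
      _ ≤ 3/2 := by linarith
  -- tail of q is in K, so x ∈ closure K = K
  have h4 : ∀ᶠ m in Filter.atTop, q m ∈ K := by
    have := Metric.tendsto_atTop.1 hqx (1/2) (by norm_num)
    rcases this with ⟨N, hN⟩
    refine Filter.eventually_atTop.2 ⟨N, fun m hm => h3 m (fun i => ?_)⟩
    have : dist (q m i) (x i) ≤ dist (q m) x := dist_le_pi_dist _ _ i
    rw [Real.dist_eq] at this
    have := hN m hm
    linarith [dist_le_pi_dist (q m) x i]
  have hxK : x ∈ K := hKclosed.mem_of_tendsto hqx h4
  exact convexHull_mono (Set.image_mono inter_subset_left) hxK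

lemma zero_mem_charCone (P : Set (Fin n → ℝ)) : 0 ∈ charCone P := by
  intro x hx; simpa using hx

lemma add_mem_charCone {P : Set (Fin n → ℝ)} {d₁ d₂ : Fin n → ℝ}
    (h₁ : d₁ ∈ charCone P) (h₂ : d₂ ∈ charCone P) : d₁ + d₂ ∈ charCone P := by
  intro x hx
  have := h₂ (x + d₁) (h₁ x hx)
  rwa [add_assoc] at this

lemma smul_mem_charCone_of_le_one {P : Set (Fin n → ℝ)} (hP : Convex ℝ P) {d : Fin n → ℝ}
    (hd : d ∈ charCone P) {a : ℝ} (ha0 : 0 ≤ a) (ha1 : a ≤ 1) : a • d ∈ charCone P := by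
  intro x hx
  have h := hP hx (hd x hx) (by linarith : (0:ℝ) ≤ 1 - a) ha0 (by ring)
  have : (1 - a) • x + a • (x + d) = x + a • d := by
    rw [smul_add]; module
  rwa [this] at h

lemma smul_mem_charCone {P : Set (Fin n → ℝ)} (hP : Convex ℝ P) {d : Fin n → ℝ}
    (hd : d ∈ charCone P) {a : ℝ} (ha0 : 0 ≤ a) : a • d ∈ charCone P := by
  obtain ⟨k, hk⟩ : ∃ k : ℕ, a ≤ k + 1 := ⟨⌈a⌉₊, by
    have := Nat.le_ceil a; push_cast; linarith⟩
  induction k generalizing a with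
  | zero => exact smul_mem_charCone_of_le_one hP hd ha0 (by push_cast at hk; linarith)
  | succ m ih =>
    by_cases h1 : a ≤ 1
    · exact smul_mem_charCone_of_le_one hP hd ha0 h1
    · push_neg at h1
      have h2 : (a - 1) • d ∈ charCone P := by
        refine ih (by linarith) ?_
        push_cast at hk ⊢; linarith
      have : a • d = d + (a - 1) • d := by module
      rw [this]
      exact add_mem_charCone hd h2
lemma isClosed_charCone {P : Set (Fin n → ℝ)} (hP : IsClosed P) : IsClosed (charCone P) := by
  have : charCone P = ⋂ x ∈ P, (fun d => x + d) ⁻¹' P := by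
    ext d; simp [charCone]
  rw [this]
  exact isClosed_biInter (fun x hx => hP.preimage (continuous_const.add continuous_id))

/-- a direction with a ray from one point of a closed convex set is in the char cone -/
lemma ray_mem_charCone {P : Set (Fin n → ℝ)} (hPconv : Convex ℝ P) (hPcl : IsClosed P)
    {x0 d : Fin n → ℝ} (hx0 : x0 ∈ P) (hray : ∀ k : ℕ, x0 + (k : ℝ) • d ∈ P) :
    d ∈ charCone P := by
  intro x hx
  set f : ℕ → (Fin n → ℝ) := fun m => x + d + (1 / ((m:ℝ) + 1)) • (x0 - x) with hf
  have hmem : ∀ m : ℕ, f m ∈ P := by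
    intro m
    set ε : ℝ := 1 / ((m:ℝ) + 1) with hε
    have hεpos : 0 < ε := by positivity
    have hεle : ε ≤ 1 := by
      rw [hε]; rw [div_le_one (by positivity)]; push_cast; linarith
    have hcomb := hPconv hx (hray (m+1)) (by linarith : (0:ℝ) ≤ 1 - ε) (le_of_lt hεpos) (by ring)
    have hk : ε * ((m:ℝ) + 1) = 1 := by
      rw [hε]; field_simp
    have heq : (1 - ε) • x + ε • (x0 + ((m+1 : ℕ) : ℝ) • d) = f m := by
      rw [hf]
      push_cast
      rw [smul_add, smul_smul, hk]
      module
    rwa [heq] at hcomb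
  have hlim : Filter.Tendsto f Filter.atTop (nhds (x + d)) := by
    have h0 : Filter.Tendsto (fun m : ℕ => 1 / ((m:ℝ) + 1)) Filter.atTop (nhds 0) :=
      tendsto_one_div_add_atTop_nhds_zero_nat
    have h1 : Filter.Tendsto (fun m : ℕ => (1 / ((m:ℝ) + 1)) • (x0 - x)) Filter.atTop
        (nhds ((0:ℝ) • (x0 - x))) := h0.smul_const _
    rw [zero_smul] at h1
    have h2 := h1.const_add (x + d)
    simp only [add_zero] at h2
    have hfe : f = fun m : ℕ => x + d + (1 / ((m:ℝ) + 1)) • (x0 - x) := hf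
    rw [hfe]
    convert h2 using 2
  exact hPcl.mem_of_tendsto hlim (Filter.Eventually.of_forall hmem)

/-- local step lemma -/
lemma step_lemma (hS : IntegrallyConvex S) {v : Fin n → ℝ}
    (hv : v ∈ charCone (convZ S)) {y : Fin n → ℤ} (hy : y ∈ S) (c : Fin n → ℝ) :
    ∃ w : Fin n → ℤ, (y + w ∈ S) ∧ (∀ i, |v i - (w i : ℝ)| < 1) ∧
      dot c v ≤ dot c (coeZ w) := by
  have hyP : coeZ y ∈ convZ S := subset_convexHull _ _ ⟨y, hy, rfl⟩
  have hxP : coeZ y + v ∈ convZ S := hv _ hyP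
  set x := coeZ y + v with hx
  have hxD := hS.2 x hxP
  set D := S ∩ intNbhd x with hD
  have hDfin : D.Finite := by
    refine ((finite_int_box x 1).subset ?_)
    intro z hz i
    exact le_of_lt (hz.2 i)
  have hDne : D.Nonempty := by
    by_contra h
    rw [not_nonempty_iff_eq_empty] at h
    rw [convZ, h] at hxD
    simp at hxD
  -- find max element
  have hlin : IsLinearMap ℝ (dot c) := ⟨dot_add c, fun a x => dot_smul c a x⟩
  obtain ⟨z, hzD, hzmax⟩ : ∃ z ∈ D, ∀ z' ∈ D, dot c (coeZ z') ≤ dot c (coeZ z) := by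
    obtain ⟨z, hz1, hz2⟩ := Set.exists_max_image D (fun z => dot c (coeZ z)) hDfin hDne
    exact ⟨z, hz1, hz2⟩
  have hxz : dot c x ≤ dot c (coeZ z) := by
    by_contra h
    push_neg at h
    have hsub : coeZ '' D ⊆ {p | dot c p ≤ dot c (coeZ z)} := by
      rintro p ⟨z', hz', rfl⟩
      exact hzmax z' hz'
    have := convexHull_min hsub (convex_halfSpace_le hlin _) hxD
    simp only [mem_setOf_eq] at this
    linarith
  refine ⟨z - y, ?_, ?_, ?_⟩
  · simpa using hzD.1
  · intro i
    have h2 := hzD.2 i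
    simp only [hx, Pi.add_apply, coeZ] at h2
    have h3 : v i - (((z - y) i : ℤ) : ℝ) = ((y i : ℝ) + v i) - (z i : ℝ) := by
      push_cast [Pi.sub_apply]; ring
    rw [h3]
    exact h2
  · have h0 : z = y + (z - y) := by abel
    have h1 : coeZ z = coeZ y + coeZ (z - y) := by
      nth_rewrite 1 [h0]; exact coeZ_add _ _
    rw [hx, h1, dot_add, dot_add] at hxz
    linarith

lemma walk_exists (hS : IntegrallyConvex S) {v : Fin n → ℝ}
    (hv : v ∈ charCone (convZ S)) (c : Fin n → ℝ) :
    ∃ (ζ : ℕ → (Fin n → ℤ)) (w : ℕ → (Fin n → ℤ)),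
      (∀ t, ζ t ∈ S) ∧ (∀ t, ζ (t+1) = ζ t + w t) ∧
      (∀ t i, |v i - (w t i : ℝ)| < 1) ∧ (∀ t, dot c v ≤ dot c (coeZ (w t))) := by
  obtain ⟨s0, hs0⟩ := hS.1
  have step : ∀ (y : Fin n → ℤ), y ∈ S → ∃ u : Fin n → ℤ, (y + u ∈ S) ∧
      (∀ i, |v i - (u i : ℝ)| < 1) ∧ dot c v ≤ dot c (coeZ u) :=
    fun y hy => step_lemma hS hv hy c
  let F : {y // y ∈ S} → {y // y ∈ S} := fun y =>
    ⟨y.1 + Classical.choose (step y.1 y.2), (Classical.choose_spec (step y.1 y.2)).1⟩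
  let Z : ℕ → {y // y ∈ S} := fun t => F^[t] ⟨s0, hs0⟩
  refine ⟨fun t => (Z t).1, fun t => Classical.choose (step (Z t).1 (Z t).2),
    fun t => (Z t).2, ?_, ?_, ?_⟩
  · intro t
    have h1 : Z (t+1) = F (Z t) := Function.iterate_succ_apply' F t _
    show (Z (t+1)).1 = (Z t).1 + _
    rw [h1]
  · intro t i; exact ((Classical.choose_spec (step (Z t).1 (Z t).2)).2.1 i)
  · intro t; exact ((Classical.choose_spec (step (Z t).1 (Z t).2)).2.2)

lemma int_abs_le_one_of_compat {a : ℝ} {b : ℤ} (h1 : |a| ≤ 1) (h2 : |a - (b:ℝ)| < 1) :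
    |b| ≤ 1 := by
  have h1' := abs_le.1 h1
  have h2' := abs_lt.1 h2
  have hb1 : (b:ℝ) < 2 := by linarith
  have hb2 : (-2:ℝ) < (b:ℝ) := by linarith
  have hc1 : b < 2 := by exact_mod_cast hb1
  have hc2 : (-2:ℤ) < b := by exact_mod_cast hb2
  rw [abs_le]; omega

/-- The main lemma: for any `c` injective on small integer vectors, the max of `c`
over `C ∩ [-1,1]^n` is attained at an integer vector of `C`. -/
lemma exists_wstar (hS : IntegrallyConvex S) (c : Fin n → ℝ)
    (hcinj : ∀ w w' : Fin n → ℤ, (∀ i, |w i| ≤ 1) → (∀ i, |w' i| ≤ 1) →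
      dot c (coeZ w) = dot c (coeZ w') → w = w') :
    ∃ wst : Fin n → ℤ, (∀ i, |wst i| ≤ 1) ∧ coeZ wst ∈ charCone (convZ S) ∧
      ∀ q ∈ charCone (convZ S), (∀ i, |q i| ≤ 1) → dot c q ≤ dot c (coeZ wst) := by
  classical
  set P := convZ S with hPdef
  have hPconv : Convex ℝ P := convex_convexHull ℝ _
  have hPcl : IsClosed P := closed_convZ hS
  set C := charCone P with hCdef
  set B : Set (Fin n → ℝ) := Set.Icc (fun _ => (-1:ℝ)) (fun _ => (1:ℝ)) with hBdef
  have hBmem : ∀ x : Fin n → ℝ, x ∈ B ↔ ∀ i, |x i| ≤ 1 := by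
    intro x
    constructor
    · intro hx i
      rw [abs_le]; exact ⟨hx.1 i, hx.2 i⟩
    · intro hx
      exact ⟨fun i => (abs_le.1 (hx i)).1, fun i => (abs_le.1 (hx i)).2⟩
  set Q := C ∩ B with hQdef
  have hQcl : IsClosed Q := (isClosed_charCone hPcl).inter isClosed_Icc
  have hQcompact : IsCompact Q :=
    IsCompact.of_isClosed_subset isCompact_Icc hQcl inter_subset_right
  have hQne : Q.Nonempty := ⟨0, zero_mem_charCone P, (hBmem 0).2 (fun i => by
    simp)⟩
  obtain ⟨v, hvQ, hvmax⟩ := hQcompact.exists_isMaxOn hQne ((continuous_dot c).continuousOn)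
  set γ := dot c v with hγdef
  have hvbox : ∀ i, |v i| ≤ 1 := (hBmem v).1 hvQ.2
  obtain ⟨ζ, w, hζS, hζstep, hwcompat, hwdot⟩ := walk_exists hS hvQ.1 c
  set ξ : ℕ → (Fin n → ℝ) := fun t => coeZ (ζ t) with hξdef
  have hξstep : ∀ t, ξ (t+1) = ξ t + coeZ (w t) := by
    intro t
    show coeZ (ζ (t+1)) = coeZ (ζ t) + coeZ (w t)
    rw [hζstep t, coeZ_add]
  have hξP : ∀ t, ξ t ∈ P := fun t => subset_convexHull _ _ ⟨ζ t, hζS t, rfl⟩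
  have hwbox : ∀ t i, |w t i| ≤ 1 :=
    fun t i => int_abs_le_one_of_compat (hvbox i) (hwcompat t i)
  -- accumulated bounds
  have hdotstep : ∀ t, dot c (ξ (t+1)) = dot c (ξ t) + dot c (coeZ (w t)) := by
    intro t; rw [hξstep t, dot_add]
  have I1 : ∀ t : ℕ, dot c (ξ 0) + t * γ ≤ dot c (ξ t) := by
    intro t; induction t with
    | zero => simp
    | succ m ih =>
      have := hwdot m
      rw [hdotstep m]; push_cast; linarith
  have I2 : ∀ (t : ℕ) (i : Fin n), |ξ t i - ξ 0 i| ≤ (t:ℝ) := by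
    intro t; induction t with
    | zero => simp
    | succ m ih =>
      intro i
      have h1 : ξ (m+1) i - ξ 0 i = (ξ m i - ξ 0 i) + (w m i : ℝ) := by
        rw [hξstep m]; simp [coeZ]; ring
      rw [h1]; push_cast
      have h2 : |(w m i : ℝ)| ≤ 1 := by
        rw [← Int.cast_abs]; exact_mod_cast hwbox m i
      calc |(ξ m i - ξ 0 i) + (w m i:ℝ)| ≤ |ξ m i - ξ 0 i| + |(w m i:ℝ)| := abs_add_le _ _
        _ ≤ (m:ℝ) + 1 := by have := ih i; linarith
  set σ : ℕ → (Fin n → ℝ) := fun t => ((t:ℝ))⁻¹ • (ξ t - ξ 0) with hσdef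
  have hσBmem : ∀ m : ℕ, σ (m+1) ∈ B := by
    intro m
    rw [hBmem]
    intro i
    have ht : (0:ℝ) < ((m+1:ℕ):ℝ) := by positivity
    have : σ (m+1) i = ((m+1:ℕ):ℝ)⁻¹ * (ξ (m+1) i - ξ 0 i) := rfl
    rw [this, abs_mul, abs_of_pos (inv_pos.2 ht)]
    calc ((m+1:ℕ):ℝ)⁻¹ * |ξ (m+1) i - ξ 0 i| ≤ ((m+1:ℕ):ℝ)⁻¹ * ((m+1:ℕ):ℝ) :=
          mul_le_mul_of_nonneg_left (I2 (m+1) i) (le_of_lt (inv_pos.2 ht))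
      _ = 1 := inv_mul_cancel₀ (ne_of_gt ht)
  obtain ⟨r, hrB, φ, hφmono, hφlim⟩ :=
    isCompact_Icc.tendsto_subseq (x := fun m => σ (m+1)) hσBmem
  -- r ∈ C
  have hrC : r ∈ C := by
    apply ray_mem_charCone hPconv hPcl (hξP 0)
    intro k
    have hmemseq : ∀ᶠ m in Filter.atTop, ξ 0 + (k:ℝ) • σ (φ m + 1) ∈ P := by
      refine Filter.eventually_atTop.2 ⟨k, fun m hm => ?_⟩
      set t : ℕ := φ m + 1 with htdef
      have htk : (k:ℝ) ≤ (t:ℝ) := by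
        have h1 : k ≤ φ m + 1 := le_trans (le_trans hm (hφmono.le_apply)) (Nat.le_succ _)
        exact_mod_cast h1
      have htpos : (0:ℝ) < (t:ℝ) := by positivity
      have heq : ξ 0 + (k:ℝ) • σ t = (1 - (k:ℝ)/(t:ℝ)) • ξ 0 + ((k:ℝ)/(t:ℝ)) • ξ t := by
        have hid : ((k:ℝ)/(t:ℝ)) = (k:ℝ) * ((t:ℝ))⁻¹ := div_eq_mul_inv _ _
        show ξ 0 + (k:ℝ) • (((t:ℝ))⁻¹ • (ξ t - ξ 0)) = _
        rw [hid]
        module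
      rw [heq]
      refine hPconv (hξP 0) (hξP t) ?_ (by positivity) (by ring)
      have : (k:ℝ)/(t:ℝ) ≤ 1 := by
        rw [div_le_one htpos]; exact htk
      linarith
    have hlim2 : Filter.Tendsto (fun m => ξ 0 + (k:ℝ) • σ (φ m + 1)) Filter.atTop
        (nhds (ξ 0 + (k:ℝ) • r)) := by
      exact Filter.Tendsto.const_add _ (hφlim.const_smul _)
    exact hPcl.mem_of_tendsto hlim2 hmemseq
  have hσdot : ∀ m : ℕ, γ ≤ dot c (σ (m+1)) := by
    intro m
    set t : ℕ := m + 1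
    have htpos : (0:ℝ) < (t:ℝ) := by positivity
    have h1 : dot c (σ t) = ((t:ℝ))⁻¹ * (dot c (ξ t) - dot c (ξ 0)) := by
      show dot c (((t:ℝ))⁻¹ • (ξ t - ξ 0)) = _
      rw [dot_smul, dot_sub]
    rw [h1]
    have h2 : (t:ℝ) * γ ≤ dot c (ξ t) - dot c (ξ 0) := by linarith [I1 t]
    calc γ = ((t:ℝ))⁻¹ * ((t:ℝ) * γ) := by field_simp
      _ ≤ ((t:ℝ))⁻¹ * (dot c (ξ t) - dot c (ξ 0)) :=
          mul_le_mul_of_nonneg_left h2 (by positivity)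
  have hdotr_ge : γ ≤ dot c r := by
    refine ge_of_tendsto' (((continuous_dot c).tendsto r).comp hφlim) (fun m => ?_)
    exact hσdot (φ m)
  have hdotr_le : dot c r ≤ γ := hvmax ⟨hrC, hrB⟩
  have hdotr : dot c r = γ := le_antisymm hdotr_le hdotr_ge
  -- existence of an integral vector attaining value γ among compatible vectors
  by_cases hex : ∃ u : Fin n → ℤ, (∀ i, |v i - (u i:ℝ)| < 1) ∧ dot c (coeZ u) = γ
  · obtain ⟨wst, hwstcompat, hwstdot⟩ := hex
    have hwstbox : ∀ i, |wst i| ≤ 1 :=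
      fun i => int_abs_le_one_of_compat (hvbox i) (hwstcompat i)
    -- the gap δ
    obtain ⟨δ, hδpos, hδprop⟩ : ∃ δ : ℝ, 0 < δ ∧ ∀ u : Fin n → ℤ,
        (∀ i, |v i - (u i:ℝ)| < 1) → γ ≤ dot c (coeZ u) → u ≠ wst →
        γ + δ ≤ dot c (coeZ u) := by
      set Bs : Set (Fin n → ℤ) := {u | (∀ i, |v i - (u i:ℝ)| < 1) ∧ γ < dot c (coeZ u)}
        with hBsdef
      have hBsfin : Bs.Finite := by
        refine (finite_int_box v 1).subset ?_
        intro u hu i; exact le_of_lt (hu.1 i)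
      by_cases hBne : Bs.Nonempty
      · obtain ⟨u₀, hu₀Bs, hu₀min⟩ := Set.exists_min_image Bs (fun u => dot c (coeZ u)) hBsfin hBne
        refine ⟨dot c (coeZ u₀) - γ, by linarith [hu₀Bs.2], ?_⟩
        intro u hucompat hudot hune
        have h1 : γ < dot c (coeZ u) := by
          rcases lt_or_eq_of_le hudot with h | h
          · exact h
          · exfalso
            apply hune
            apply hcinj u wst (fun i => int_abs_le_one_of_compat (hvbox i) (hucompat i)) hwstbox
            rw [← h, hwstdot]
        have := hu₀min u ⟨hucompat, h1⟩
        linarith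
      · refine ⟨1, one_pos, ?_⟩
        intro u hucompat hudot hune
        exfalso
        apply hBne
        refine ⟨u, hucompat, ?_⟩
        rcases lt_or_eq_of_le hudot with h | h
        · exact h
        · exfalso
          apply hune
          apply hcinj u wst (fun i => int_abs_le_one_of_compat (hvbox i) (hucompat i)) hwstbox
          rw [← h, hwstdot]
    -- key accumulated deviation bound
    have I3 : ∀ (t : ℕ) (i : Fin n), |ξ t i - ξ 0 i - t * (wst i : ℝ)| ≤
        (2/δ) * (dot c (ξ t) - dot c (ξ 0) - t * γ) := by
      intro t
      induction t with
      | zero => intro i; simp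
      | succ m ih =>
        intro i
        have hstep : ξ (m+1) i - ξ 0 i - ((m+1:ℕ):ℝ) * (wst i:ℝ) =
            (ξ m i - ξ 0 i - (m:ℝ) * (wst i:ℝ)) + ((w m i : ℝ) - (wst i:ℝ)) := by
          have h1 : ξ (m+1) i = ξ m i + (w m i : ℝ) := by rw [hξstep m]; simp [coeZ]
          rw [h1]; push_cast; ring
        have hdd := hdotstep m
        by_cases hw : w m = wst
        · have hdw : dot c (coeZ (w m)) = γ := by rw [hw, hwstdot]
          have h2 : (w m i : ℝ) - (wst i : ℝ) = 0 := by rw [hw]; ring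
          rw [hstep, h2, add_zero]
          have := ih i
          push_cast
          push_cast at this
          rw [hdd, hdw]
          calc |ξ m i - ξ 0 i - (m:ℝ) * (wst i:ℝ)| ≤
              (2/δ) * (dot c (ξ m) - dot c (ξ 0) - (m:ℝ) * γ) := this
            _ = (2/δ) * (dot c (ξ m) + γ - dot c (ξ 0) - ((m:ℝ)+1) * γ) := by ring
        · have hge : γ + δ ≤ dot c (coeZ (w m)) := hδprop _ (hwcompat m) (hwdot m) hw
          have habs : |(w m i:ℝ) - (wst i:ℝ)| ≤ 2 := by
            have h1 := hwcompat m i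
            have h2 := hwstcompat i
            calc |(w m i:ℝ) - (wst i:ℝ)| = |((w m i:ℝ) - v i) + (v i - (wst i:ℝ))| := by
                  ring_nf
              _ ≤ |(w m i:ℝ) - v i| + |v i - (wst i:ℝ)| := abs_add_le _ _
              _ ≤ 2 := by rw [abs_sub_comm] at h1 ⊢; linarith [abs_sub_comm (v i) ((w m i:ℝ))]
          have h3 : (2/δ) * δ = 2 := by field_simp
          have h4 : (2/δ) * (dot c (coeZ (w m)) - γ) ≥ 2 := by
            have h5 : dot c (coeZ (w m)) - γ ≥ δ := by linarith
            have h6 : (0:ℝ) ≤ 2/δ := by positivity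
            nlinarith
          rw [hstep]
          have h7 := ih i
          push_cast
          push_cast at h7
          calc |ξ m i - ξ 0 i - (m:ℝ)*(wst i:ℝ) + ((w m i:ℝ) - (wst i:ℝ))| ≤
              |ξ m i - ξ 0 i - (m:ℝ)*(wst i:ℝ)| + |(w m i:ℝ) - (wst i:ℝ)| := abs_add_le _ _
            _ ≤ (2/δ) * (dot c (ξ m) - dot c (ξ 0) - (m:ℝ)*γ) + 2 := by linarith
            _ ≤ (2/δ) * (dot c (ξ (m+1)) - dot c (ξ 0) - ((m:ℝ)+1)*γ) := by
                rw [hdd]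
                have h6 : (0:ℝ) ≤ 2/δ := by positivity
                nlinarith
    -- transfer to σ
    have hσw : ∀ (m : ℕ) (i : Fin n), |σ (m+1) i - (wst i:ℝ)| ≤
        (2/δ) * (dot c (σ (m+1)) - γ) := by
      intro m i
      set t : ℕ := m + 1 with htdef
      have htpos : (0:ℝ) < (t:ℝ) := by positivity
      have h2 : σ t i - (wst i:ℝ) = ((t:ℝ))⁻¹ * (ξ t i - ξ 0 i - (t:ℝ) * (wst i:ℝ)) := by
        have : σ t i = ((t:ℝ))⁻¹ * (ξ t i - ξ 0 i) := rfl
        rw [this]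
        field_simp
      have h3 : dot c (σ t) - γ = ((t:ℝ))⁻¹ * (dot c (ξ t) - dot c (ξ 0) - (t:ℝ) * γ) := by
        have : dot c (σ t) = ((t:ℝ))⁻¹ * (dot c (ξ t) - dot c (ξ 0)) := by
          show dot c (((t:ℝ))⁻¹ • (ξ t - ξ 0)) = _
          rw [dot_smul, dot_sub]
        rw [this]
        field_simp
      rw [h2, h3, abs_mul, abs_of_pos (inv_pos.2 htpos)]
      have h5 := I3 t i
      calc ((t:ℝ))⁻¹ * |ξ t i - ξ 0 i - (t:ℝ)*(wst i:ℝ)| ≤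
          ((t:ℝ))⁻¹ * ((2/δ) * (dot c (ξ t) - dot c (ξ 0) - (t:ℝ)*γ)) :=
            mul_le_mul_of_nonneg_left h5 (le_of_lt (inv_pos.2 htpos))
        _ = (2/δ) * (((t:ℝ))⁻¹ * (dot c (ξ t) - dot c (ξ 0) - (t:ℝ)*γ)) := by ring
    -- pass to the limit
    have hreq : ∀ i, r i = (wst i : ℝ) := by
      intro i
      have hL : Filter.Tendsto (fun m => |σ (φ m + 1) i - (wst i:ℝ)|) Filter.atTop
          (nhds (|r i - (wst i:ℝ)|)) := by
        have h1 : Filter.Tendsto (fun m => σ (φ m + 1) i) Filter.atTop (nhds (r i)) := by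
          have := hφlim
          exact (((continuous_apply i).tendsto r).comp this)
        exact (h1.sub_const _).abs
      have hR : Filter.Tendsto (fun m => (2/δ) * (dot c (σ (φ m + 1)) - γ)) Filter.atTop
          (nhds ((2/δ) * (dot c r - γ))) := by
        have h1 : Filter.Tendsto (fun m => dot c (σ (φ m + 1))) Filter.atTop
            (nhds (dot c r)) := ((continuous_dot c).tendsto r).comp hφlim
        exact ((h1.sub_const _).const_mul _)
      have h2 : |r i - (wst i:ℝ)| ≤ (2/δ) * (dot c r - γ) :=
        le_of_tendsto_of_tendsto' hL hR (fun m => hσw (φ m) i)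
      rw [hdotr] at h2
      simp only [sub_self, mul_zero] at h2
      have h3 := abs_nonneg (r i - (wst i:ℝ))
      have h4 : |r i - (wst i:ℝ)| = 0 := le_antisymm h2 h3
      have h5 := abs_eq_zero.1 h4
      linarith [sub_eq_zero.1 h5, le_of_eq (sub_eq_zero.1 h5)]
    have hwstC : coeZ wst ∈ C := by
      have : coeZ wst = r := by
        funext i; rw [coeZ]; exact (hreq i).symm
      rw [this]; exact hrC
    refine ⟨wst, hwstbox, hwstC, ?_⟩
    intro q hq hqbox
    have := hvmax ⟨hq, (hBmem q).2 hqbox⟩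
    rw [hwstdot]
    exact this
  · -- no integral vector attains γ: contradiction
    exfalso
    set Bs : Set (Fin n → ℤ) := {u | (∀ i, |v i - (u i:ℝ)| < 1) ∧ γ ≤ dot c (coeZ u)}
      with hBsdef
    have hBsfin : Bs.Finite := by
      refine (finite_int_box v 1).subset ?_
      intro u hu i; exact le_of_lt (hu.1 i)
    have hBne : Bs.Nonempty := ⟨w 0, fun i => hwcompat 0 i, hwdot 0⟩
    obtain ⟨u₀, hu₀Bs, hu₀min⟩ := Set.exists_min_image Bs (fun u => dot c (coeZ u)) hBsfin hBne
    set δ₀ := dot c (coeZ u₀) - γ with hδ₀def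
    have hδ₀pos : 0 < δ₀ := by
      rcases lt_or_eq_of_le hu₀Bs.2 with h | h
      · rw [hδ₀def]; linarith
      · exfalso; exact hex ⟨u₀, hu₀Bs.1, h.symm⟩
    have I1' : ∀ t : ℕ, dot c (ξ 0) + t * (γ + δ₀) ≤ dot c (ξ t) := by
      intro t; induction t with
      | zero => simp
      | succ m ih =>
        have h1 : γ + δ₀ ≤ dot c (coeZ (w m)) := by
          have := hu₀min (w m) ⟨fun i => hwcompat m i, hwdot m⟩
          rw [hδ₀def]; linarith
        rw [hdotstep m]; push_cast; linarith
    have hσdot' : ∀ m : ℕ, γ + δ₀ ≤ dot c (σ (m+1)) := by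
      intro m
      set t : ℕ := m + 1
      have htpos : (0:ℝ) < (t:ℝ) := by positivity
      have h1 : dot c (σ t) = ((t:ℝ))⁻¹ * (dot c (ξ t) - dot c (ξ 0)) := by
        show dot c (((t:ℝ))⁻¹ • (ξ t - ξ 0)) = _
        rw [dot_smul, dot_sub]
      rw [h1]
      have h2 : (t:ℝ) * (γ + δ₀) ≤ dot c (ξ t) - dot c (ξ 0) := by linarith [I1' t]
      calc γ + δ₀ = ((t:ℝ))⁻¹ * ((t:ℝ) * (γ + δ₀)) := by field_simp
        _ ≤ ((t:ℝ))⁻¹ * (dot c (ξ t) - dot c (ξ 0)) :=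
            mul_le_mul_of_nonneg_left h2 (by positivity)
    have : γ + δ₀ ≤ dot c r := by
      refine ge_of_tendsto' (((continuous_dot c).tendsto r).comp hφlim) (fun m => ?_)
      exact hσdot' (φ m)
    rw [hdotr] at this
    linarith

lemma dot_comm (a b : Fin n → ℝ) : dot a b = dot b a := by
  unfold dot; exact Finset.sum_congr rfl (fun i _ => mul_comm _ _)

lemma dot_self_pos {h : Fin n → ℝ} (hh : h ≠ 0) : 0 < dot h h := by
  have hex : ∃ i, h i ≠ 0 := by
    by_contra hc
    push_neg at hc
    exact hh (funext hc)
  obtain ⟨i, hi⟩ := hex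
  refine Finset.sum_pos' (fun j _ => mul_self_nonneg _) ⟨i, Finset.mem_univ i, ?_⟩
  exact mul_self_pos.2 hi

lemma generic_perturb (H : Finset (Fin n → ℝ)) :
    ∀ (c : Fin n → ℝ) (ε : ℝ), 0 < ε → (∀ h ∈ H, h ≠ 0) →
    ∃ c' : Fin n → ℝ, (∀ h ∈ H, dot c' h ≠ 0) ∧ ∀ i, |c' i - c i| ≤ ε := by
  induction H using Finset.induction_on with
  | empty =>
    intro c ε hε _
    exact ⟨c, by simp, fun i => by simp [le_of_lt hε]⟩
  | @insert h₀ Hs hnm ih =>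
    intro c ε hε h0
    obtain ⟨c₁, hc₁, hc₁close⟩ := ih c (ε/2) (by positivity)
      (fun h hh => h0 h (Finset.mem_insert_of_mem hh))
    have hh₀ : h₀ ≠ 0 := h0 h₀ (Finset.mem_insert_self _ _)
    have hd : 0 < dot h₀ h₀ := dot_self_pos hh₀
    by_cases hz : dot c₁ h₀ = 0
    · -- perturb along h₀
      set M : ℝ := 1 + ∑ i, |h₀ i| with hM
      have hMpos : 0 < M := by positivity
      have hM1 : ∀ i, |h₀ i| ≤ M := fun i => by
        have h1 : |h₀ i| ≤ ∑ j, |h₀ j| :=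
          Finset.single_le_sum (f := fun j => |h₀ j|) (fun j _ => abs_nonneg _)
            (Finset.mem_univ i)
        rw [hM]; linarith
      set m : ℝ := if hne : Hs.Nonempty then
          Hs.inf' hne (fun h => |dot c₁ h| / (1 + |dot h₀ h|)) else 1 with hm
      have hmpos : 0 < m := by
        rw [hm]
        split_ifs with hne
        · rw [Finset.lt_inf'_iff]
          intro h hh
          have := hc₁ h hh
          positivity
        · exact one_pos
      set τ : ℝ := min (ε/(2*M)) (m/2) with hτ
      have hτpos : 0 < τ := by
        rw [hτ]; refine lt_min (by positivity) (by positivity)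
      refine ⟨c₁ + τ • h₀, ?_, ?_⟩
      · intro h hh
        have hlin : dot (c₁ + τ • h₀) h = dot c₁ h + τ * dot h₀ h := by
          rw [dot_comm, dot_add, dot_smul, dot_comm h c₁, dot_comm h h₀]
        rcases Finset.mem_insert.1 hh with rfl | hh'
        · rw [hlin, hz, zero_add]
          positivity
        · rw [hlin]
          have hbound : |τ * dot h₀ h| < |dot c₁ h| := by
            have h2 : m ≤ |dot c₁ h| / (1 + |dot h₀ h|) := by
              rw [hm]
              split_ifs with hne
              · exact Finset.inf'_le _ hh'
              · exact absurd ⟨h, hh'⟩ hne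
            have h3 : τ ≤ m/2 := min_le_right _ _
            have h4 : 0 < 1 + |dot h₀ h| := by positivity
            rw [abs_mul, abs_of_pos hτpos]
            have h5 : τ * (1 + |dot h₀ h|) < m * (1 + |dot h₀ h|) := by
              have : τ < m := lt_of_le_of_lt h3 (by linarith)
              exact mul_lt_mul_of_pos_right this h4
            have h6 : m * (1 + |dot h₀ h|) ≤ |dot c₁ h| := by
              rw [le_div_iff₀ h4] at h2
              linarith
            nlinarith [abs_nonneg (dot h₀ h), hτpos.le]
          intro hcontra
          have : dot c₁ h = -(τ * dot h₀ h) := by linarith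
          rw [this, abs_neg] at hbound
          linarith
      · intro i
        have h1 : |(c₁ + τ • h₀) i - c i| ≤ |c₁ i - c i| + |τ * h₀ i| := by
          have : (c₁ + τ • h₀) i - c i = (c₁ i - c i) + τ * h₀ i := by
            simp [Pi.add_apply, Pi.smul_apply]; ring
          rw [this]; exact abs_add_le _ _
        have h2 : |τ * h₀ i| ≤ ε/2 := by
          rw [abs_mul, abs_of_pos hτpos]
          have h3 : τ ≤ ε/(2*M) := min_le_left _ _
          calc τ * |h₀ i| ≤ (ε/(2*M)) * M :=
                mul_le_mul h3 (hM1 i) (abs_nonneg _) (by positivity)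
            _ = ε/2 := by
                field_simp
        have := hc₁close i
        linarith
    · refine ⟨c₁, ?_, fun i => le_trans (hc₁close i) (by linarith)⟩
      intro h hh
      rcases Finset.mem_insert.1 hh with rfl | hh'
      · exact hz
      · exact hc₁ h hh'

lemma dot_perturb_bound {c' c₀ x : Fin n → ℝ} {ε : ℝ}
    (hc : ∀ i, |c' i - c₀ i| ≤ ε) (hx : ∀ i, |x i| ≤ 1) (hε : 0 ≤ ε) :
    |dot c' x - dot c₀ x| ≤ ε * n := by
  have h1 : dot c' x - dot c₀ x = ∑ i, (c' i - c₀ i) * x i := by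
    unfold dot
    rw [← Finset.sum_sub_distrib]
    exact Finset.sum_congr rfl (fun i _ => by ring)
  rw [h1]
  calc |∑ i, (c' i - c₀ i) * x i| ≤ ∑ i, |(c' i - c₀ i) * x i| :=
        Finset.abs_sum_le_sum_abs _ _
    _ ≤ ∑ _i : Fin n, ε := by
        refine Finset.sum_le_sum (fun i _ => ?_)
        rw [abs_mul]
        calc |c' i - c₀ i| * |x i| ≤ ε * 1 :=
              mul_le_mul (hc i) (hx i) (abs_nonneg _) hε
          _ = ε := mul_one ε
    _ = ε * n := by simp [Finset.sum_const, mul_comm]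

lemma coeZ_injective : Function.Injective (coeZ (n := n)) := by
  intro a b hab
  funext i
  have : ((a i : ℝ)) = (b i : ℝ) := congrFun hab i
  exact_mod_cast this

/-- every element of C ∩ [-1,1]^n lies in the convex hull of the small integer
vectors of C -/
lemma Q_subset_hullW (hS : IntegrallyConvex S) :
    ∀ q ∈ charCone (convZ S), (∀ i, |q i| ≤ 1) →
      q ∈ convexHull ℝ (coeZ ''
        {u : Fin n → ℤ | (∀ i, |u i| ≤ 1) ∧ coeZ u ∈ charCone (convZ S)}) := by
  classical
  intro q hqC hqbox
  by_contra hq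
  set W : Set (Fin n → ℤ) :=
    {u | (∀ i, |u i| ≤ 1) ∧ coeZ u ∈ charCone (convZ S)} with hWdef
  have hWfin : W.Finite := by
    refine (finite_int_box 0 1).subset ?_
    intro u hu i
    have := hu.1 i
    have h2 : |(u i : ℝ)| ≤ 1 := by
      rw [← Int.cast_abs]; exact_mod_cast this
    simpa using h2
  have hKclosed : IsClosed (convexHull ℝ (coeZ '' W)) :=
    (hWfin.image _).isClosed_convexHull (𝕜 := ℝ)
  obtain ⟨f, u, hfu, hfq⟩ :=
    geometric_hahn_banach_closed_point (convex_convexHull ℝ _) hKclosed hq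
  set c₀ : Fin n → ℝ := fun i => f (fun j => if i = j then 1 else 0) with hc₀
  have hf_eq : ∀ x : Fin n → ℝ, f x = dot c₀ x := by
    intro x
    conv_lhs => rw [pi_eq_sum_univ x]
    rw [map_sum]
    unfold dot
    refine Finset.sum_congr rfl (fun i _ => ?_)
    rw [map_smul, smul_eq_mul]
    ring
  set gap : ℝ := f q - u with hgapdef
  have hgappos : 0 < gap := by rw [hgapdef]; linarith
  -- the finite set of difference vectors
  set Vfin : Finset (Fin n → ℤ) := (finite_int_box (0 : Fin n → ℝ) 1).toFinset with hVfin
  have hVmem : ∀ z : Fin n → ℤ, z ∈ Vfin ↔ ∀ i, |(0:ℝ) - (z i:ℝ)| ≤ 1 := by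
    intro z; rw [hVfin, Set.Finite.mem_toFinset]; rfl
  set H : Finset (Fin n → ℝ) :=
    ((Vfin ×ˢ Vfin).filter (fun p => p.1 ≠ p.2)).image
      (fun p => coeZ p.1 - coeZ p.2) with hHdef
  have hH0 : ∀ h ∈ H, h ≠ 0 := by
    intro h hh
    rw [hHdef] at hh
    obtain ⟨p, hp, rfl⟩ := Finset.mem_image.1 hh
    have hne := (Finset.mem_filter.1 hp).2
    intro hc
    apply hne
    apply coeZ_injective
    have := sub_eq_zero.1 hc
    exact this
  set ε : ℝ := gap / (2 * n + 2) with hεdef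
  have hεpos : 0 < ε := by rw [hεdef]; positivity
  obtain ⟨c, hcH, hcclose⟩ := generic_perturb H c₀ ε hεpos hH0
  -- c is injective on small vectors
  have hcinj : ∀ w w' : Fin n → ℤ, (∀ i, |w i| ≤ 1) → (∀ i, |w' i| ≤ 1) →
      dot c (coeZ w) = dot c (coeZ w') → w = w' := by
    intro w w' hw hw' hdot
    by_contra hne
    have hwV : w ∈ Vfin := (hVmem w).2 (fun i => by
      have h2 : |(w i : ℝ)| ≤ 1 := by rw [← Int.cast_abs]; exact_mod_cast hw i
      simpa using h2)
    have hw'V : w' ∈ Vfin := (hVmem w').2 (fun i => by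
      have h2 : |(w' i : ℝ)| ≤ 1 := by rw [← Int.cast_abs]; exact_mod_cast hw' i
      simpa using h2)
    have hmem : coeZ w - coeZ w' ∈ H := by
      rw [hHdef]
      refine Finset.mem_image.2 ⟨(w, w'), ?_, rfl⟩
      rw [Finset.mem_filter]
      exact ⟨Finset.mem_product.2 ⟨hwV, hw'V⟩, hne⟩
    have := hcH _ hmem
    rw [dot_sub] at this
    exact this (by linarith)
  -- apply the main lemma
  obtain ⟨wst, hwstbox, hwstC, hwstmax⟩ := exists_wstar hS c hcinj
  have hwstW : coeZ wst ∈ coeZ '' W := ⟨wst, ⟨hwstbox, hwstC⟩, rfl⟩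
  have hfwst : f (coeZ wst) < u := hfu _ (subset_convexHull ℝ _ hwstW)
  have hwstbox' : ∀ i, |coeZ wst i| ≤ 1 := fun i => by
    show |(wst i : ℝ)| ≤ 1
    rw [← Int.cast_abs]; exact_mod_cast hwstbox i
  -- perturbation bounds
  have hb1 : |dot c q - dot c₀ q| ≤ ε * n := dot_perturb_bound hcclose hqbox hεpos.le
  have hb2 : |dot c (coeZ wst) - dot c₀ (coeZ wst)| ≤ ε * n :=
    dot_perturb_bound hcclose hwstbox' hεpos.le
  have hmax := hwstmax q hqC hqbox
  -- contradiction
  have h1 : dot c₀ q = f q := (hf_eq q).symm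
  have h2 : dot c₀ (coeZ wst) = f (coeZ wst) := (hf_eq _).symm
  have hεn : ε * n ≤ gap * n / (2*n+2) := by
    rw [hεdef]; rw [div_mul_eq_mul_div]
  have hn2 : gap * n / (2*n+2) < gap / 2 := by
    rw [div_lt_div_iff₀ (by positivity) (by norm_num)]
    have : (0:ℝ) ≤ n := Nat.cast_nonneg n
    nlinarith
  have habs1 := abs_le.1 hb1
  have habs2 := abs_le.1 hb2
  rw [h1] at habs1
  rw [h2] at habs2
  -- f q = u + gap, f wst < u
  have : dot c q ≥ f q - ε * n := by linarith
  have h3 : dot c (coeZ wst) ≤ f (coeZ wst) + ε * n := by linarith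
  have h4 : f q = u + gap := by rw [hgapdef]; ring
  linarith

lemma coeZ_zero : coeZ (0 : Fin n → ℤ) = 0 := by
  funext i; simp [coeZ]

lemma coeZ_int_smul (M : ℕ) (u : Fin n → ℤ) :
    coeZ ((M:ℤ) • u) = (M:ℝ) • coeZ u := by
  funext i
  simp only [coeZ, Pi.smul_apply, smul_eq_mul]
  push_cast; ring

lemma convex_charCone {P : Set (Fin n → ℝ)} (hP : Convex ℝ P) : Convex ℝ (charCone P) := by
  intro d₁ h₁ d₂ h₂ a b ha hb hab
  intro x hx
  have h3 := hP (h₁ x hx) (h₂ x hx) ha hb hab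
  have heq : a • (x + d₁) + b • (x + d₂) = (a+b) • x + (a • d₁ + b • d₂) := by module
  rw [heq, hab, one_smul] at h3
  exact h3

end CCaux

/-- The characteristic cone `C` of the convex hull of an integrally convex
set is generated by vectors in `{-1,0,+1}^n`; in particular `C` is an integer polyhedron. -/
theorem charCone_integrallyConvex_generated {n : ℕ} (S : Set (Fin n → ℤ))
    (hS : IntegrallyConvex S) :
    (∃ (k : ℕ) (v : Fin k → (Fin n → ℝ)),
      (∀ j i, v j i = -1 ∨ v j i = 0 ∨ v j i = 1) ∧
      charCone (convZ S) =
        {x | ∃ α : Fin k → ℝ, (∀ j, 0 ≤ α j) ∧ x = ∑ j, α j • v j}) ∧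
    charCone (convZ S) = convZ {z : Fin n → ℤ | coeZ z ∈ charCone (convZ S)} := by
  classical
  set P := convZ S with hPdef
  have hPconv : Convex ℝ P := convex_convexHull ℝ _
  set C := charCone P with hCdef
  set W : Set (Fin n → ℤ) := {u | (∀ i, |u i| ≤ 1) ∧ coeZ u ∈ C} with hWdef
  have hWfin : W.Finite := by
    refine (finite_int_box 0 1).subset ?_
    intro u hu i
    have h2 : |(u i : ℝ)| ≤ 1 := by
      rw [← Int.cast_abs]; exact_mod_cast hu.1 i
    simpa using h2
  set Wfin : Finset (Fin n → ℤ) := hWfin.toFinset with hWfindef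
  set k : ℕ := Wfin.card with hk
  set e : Fin k ≃ {x // x ∈ Wfin} := Wfin.equivFin.symm with he
  set vv : Fin k → (Fin n → ℝ) := fun j => coeZ ((e j) : Fin n → ℤ) with hvv
  have hmemW : ∀ j : Fin k, ((e j) : Fin n → ℤ) ∈ W := by
    intro j
    exact hWfin.mem_toFinset.1 (e j).2
  have hvvC : ∀ j, vv j ∈ C := fun j => (hmemW j).2
  have hvvbox : ∀ j i, |((e j : Fin n → ℤ)) i| ≤ 1 := fun j i => (hmemW j).1 i
  -- the representation of any element of C
  have hrep : ∀ d ∈ C, ∃ α : Fin k → ℝ, (∀ j, 0 ≤ α j) ∧ d = ∑ j, α j • vv j := by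
    intro d hd
    set lam : ℝ := 1 + ∑ i, |d i| with hlam
    have hlampos : 0 < lam := by positivity
    set q : Fin n → ℝ := lam⁻¹ • d with hq
    have hqC : q ∈ C := smul_mem_charCone hPconv hd (by positivity)
    have hqbox : ∀ i, |q i| ≤ 1 := by
      intro i
      have h1 : |d i| ≤ lam := by
        have h2 : |d i| ≤ ∑ j, |d j| :=
          Finset.single_le_sum (f := fun j => |d j|) (fun j _ => abs_nonneg _)
            (Finset.mem_univ i)
        rw [hlam]; linarith
      have : q i = lam⁻¹ * d i := rfl
      rw [this, abs_mul, abs_of_pos (inv_pos.2 hlampos)]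
      calc lam⁻¹ * |d i| ≤ lam⁻¹ * lam :=
            mul_le_mul_of_nonneg_left h1 (by positivity)
        _ = 1 := inv_mul_cancel₀ (ne_of_gt hlampos)
    have hqhull := Q_subset_hullW hS q hqC hqbox
    -- rewrite the hull as a finset hull
    have him : coeZ '' W = ↑(Wfin.image coeZ) := by
      rw [Finset.coe_image, hWfindef, Set.Finite.coe_toFinset]
    rw [him] at hqhull
    rw [Finset.convexHull_eq] at hqhull
    obtain ⟨wt, hwt0, hwt1, hwtc⟩ := hqhull
    have hqsum : q = ∑ y ∈ Wfin.image coeZ, wt y • y := by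
      rw [← hwtc, Finset.centerMass_eq_of_sum_1 _ _ hwt1]
      simp
    -- reindex
    have hinj : ∀ x ∈ Wfin, ∀ y ∈ Wfin, coeZ x = coeZ y → x = y :=
      fun x _ y _ h => coeZ_injective h
    have hsum2 : ∑ y ∈ Wfin.image coeZ, wt y • y = ∑ u ∈ Wfin, wt (coeZ u) • coeZ u :=
      Finset.sum_image hinj
    have hsum3 : ∑ u ∈ Wfin, wt (coeZ u) • coeZ u
        = ∑ j : Fin k, wt (vv j) • vv j := by
      rw [← Finset.sum_coe_sort Wfin (fun u => wt (coeZ u) • coeZ u)]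
      rw [← Equiv.sum_comp e (fun x => wt (coeZ (x : Fin n → ℤ)) • coeZ (x : Fin n → ℤ))]
    refine ⟨fun j => lam * wt (vv j), fun j => ?_, ?_⟩
    · have : vv j ∈ Wfin.image coeZ :=
        Finset.mem_image.2 ⟨(e j : Fin n → ℤ), (e j).2, rfl⟩
      exact mul_nonneg hlampos.le (hwt0 _ this)
    · have hd2 : d = lam • q := by
        rw [hq, smul_smul, mul_inv_cancel₀ (ne_of_gt hlampos), one_smul]
      rw [hd2, hqsum, hsum2, hsum3, Finset.smul_sum]
      refine Finset.sum_congr rfl (fun j _ => ?_)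
      rw [smul_smul]
  constructor
  · refine ⟨k, vv, ?_, ?_⟩
    · intro j i
      have h1 := hvvbox j i
      rw [abs_le] at h1
      have h2 : ((e j : Fin n → ℤ)) i = -1 ∨ ((e j : Fin n → ℤ)) i = 0 ∨
          ((e j : Fin n → ℤ)) i = 1 := by omega
      have h3 : vv j i = (((e j : Fin n → ℤ)) i : ℝ) := rfl
      rcases h2 with h | h | h
      · left; rw [h3, h]; norm_num
      · right; left; rw [h3, h]; norm_num
      · right; right; rw [h3, h]; norm_num
    · ext d
      constructor
      · intro hd
        obtain ⟨α, hα0, hαsum⟩ := hrep d hd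
        exact ⟨α, hα0, hαsum⟩
      · rintro ⟨α, hα0, rfl⟩
        refine Finset.sum_induction _ (fun y => y ∈ C)
          (fun a b ha hb => add_mem_charCone ha hb) (zero_mem_charCone P) ?_
        intro j _
        exact smul_mem_charCone hPconv (hvvC j) (hα0 j)
  · ext d
    constructor
    · intro hd
      obtain ⟨α, hα0, hαsum⟩ := hrep d hd
      set A : ℝ := ∑ j, α j with hA
      have hA0 : 0 ≤ A := Finset.sum_nonneg (fun j _ => hα0 j)
      set M : ℕ := ⌈A⌉₊ + 1 with hM
      have hAM : A ≤ (M:ℝ) := by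
        rw [hM]; push_cast
        linarith [Nat.le_ceil A]
      have hM0 : (0:ℝ) < M := by rw [hM]; push_cast; positivity
      -- center of mass representation
      set T : Set (Fin n → ℝ) := coeZ '' {z : Fin n → ℤ | coeZ z ∈ C} with hT
      set w : Option (Fin k) → ℝ := fun o => o.elim (1 - A/(M:ℝ)) (fun j => α j / M) with hw
      set z : Option (Fin k) → (Fin n → ℝ) := fun o => o.elim 0 (fun j => (M:ℝ) • vv j)
        with hz
      have hw0 : ∀ o ∈ (Finset.univ : Finset (Option (Fin k))), 0 ≤ w o := by
        intro o _
        match o with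
        | none =>
          show 0 ≤ 1 - A/(M:ℝ)
          have : A/(M:ℝ) ≤ 1 := by rw [div_le_one hM0]; exact hAM
          linarith
        | some j =>
          show 0 ≤ α j / M
          exact div_nonneg (hα0 j) hM0.le
      have hwsum : ∑ o : Option (Fin k), w o = 1 := by
        rw [Fintype.sum_option]
        show (1 - A/(M:ℝ)) + ∑ j, α j / M = 1
        rw [← Finset.sum_div]
        rw [← hA]
        field_simp
        ring
      have hzT : ∀ o ∈ (Finset.univ : Finset (Option (Fin k))), z o ∈ T := by
        intro o _
        match o with
        | none =>
          refine ⟨0, ?_, coeZ_zero⟩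
          show coeZ 0 ∈ C
          rw [coeZ_zero]
          exact zero_mem_charCone P
        | some j =>
          refine ⟨(M:ℤ) • ((e j) : Fin n → ℤ), ?_, ?_⟩
          · show coeZ ((M:ℤ) • _) ∈ C
            rw [coeZ_int_smul]
            exact smul_mem_charCone hPconv (hvvC j) (by positivity)
          · exact coeZ_int_smul M _
      have hcm := Finset.centerMass_mem_convexHull (Finset.univ : Finset (Option (Fin k)))
        hw0 (by rw [hwsum]; norm_num) hzT
      have hcmeq : (Finset.univ : Finset (Option (Fin k))).centerMass w z = d := by
        rw [Finset.centerMass_eq_of_sum_1 _ _ hwsum]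
        rw [Fintype.sum_option]
        show (1 - A/(M:ℝ)) • (0:Fin n → ℝ) + ∑ j, (α j / M) • ((M:ℝ) • vv j) = d
        rw [smul_zero, zero_add, hαsum]
        refine Finset.sum_congr rfl (fun j _ => ?_)
        rw [smul_smul, div_mul_cancel₀ _ (ne_of_gt hM0)]
      rw [hcmeq] at hcm
      exact hcm
    · intro hd
      refine convexHull_min ?_ (convex_charCone hPconv) hd
      rintro p ⟨zz, hzz, rfl⟩
      exact hzz
end
end

section
/- Let X = {0,1}^m ⊆ ℝ^m. For any subset R ⊆ X and any d in conv(X) \ conv(R), there exists a subset B ⊆ X satisfying: (i) R ∩ B = ∅; (ii) d ∉ conv(X \ B); and moreover the elements of B can be ordered as B = {d¹, d², …, d^l} (with l = |B|) so that for each i = 1,…,l, conv({d¹, …, d^i}) ∩ conv({d^i, d^{i+1}, …, d^l} ∪ (X \ B)) = {d^i}. In particular, conv(B) ∩ conv(X \ B) = ∅. -/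
open Set Pointwise

noncomputable section

private lemma hull_bound_le {m : ℕ} (L : (Fin m → ℝ) →ₗ[ℝ] ℝ) {S : Set (Fin m → ℝ)}
    {a : ℝ} (h : ∀ x ∈ S, L x ≤ a) {p : Fin m → ℝ} (hp : p ∈ convexHull ℝ S) : L p ≤ a :=
  convexHull_min h (convex_halfSpace_le L.isLinear a) hp

private lemma hull_bound_ge {m : ℕ} (L : (Fin m → ℝ) →ₗ[ℝ] ℝ) {S : Set (Fin m → ℝ)}
    {a : ℝ} (h : ∀ x ∈ S, a ≤ L x) {p : Fin m → ℝ} (hp : p ∈ convexHull ℝ S) : a ≤ L p :=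
  convexHull_min h (convex_halfSpace_ge L.isLinear a) hp

private lemma hull_bound_lt {m : ℕ} (L : (Fin m → ℝ) →ₗ[ℝ] ℝ) {S : Set (Fin m → ℝ)}
    {a : ℝ} (h : ∀ x ∈ S, L x < a) {p : Fin m → ℝ} (hp : p ∈ convexHull ℝ S) : L p < a :=
  convexHull_min h (convex_halfSpace_lt L.isLinear a) hp

private lemma face_point {m : ℕ} (L : (Fin m → ℝ) →ₗ[ℝ] ℝ) {S : Set (Fin m → ℝ)}
    (hS : S.Finite) {a : ℝ} {x₀ : Fin m → ℝ} (hx₀S : x₀ ∈ S)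
    (hge : ∀ x ∈ S, a ≤ L x) (huniq : ∀ x ∈ S, L x = a → x = x₀)
    {p : Fin m → ℝ} (hp : p ∈ convexHull ℝ S) (hpa : L p = a) : p = x₀ := by
  classical
  rw [hS.convexHull_eq] at hp
  obtain ⟨w, hw0, hw1, hwp⟩ := hp
  rw [Finset.centerMass_eq_of_sum_1 _ _ hw1] at hwp
  simp only [id_eq] at hwp
  have hx₀t : x₀ ∈ hS.toFinset := hS.mem_toFinset.mpr hx₀S
  have hLp : ∑ y ∈ hS.toFinset, w y * L y = a := by
    have := congrArg L hwp
    rw [map_sum] at this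
    simp only [map_smul, smul_eq_mul] at this
    rw [this, hpa]
  have hsum0 : ∑ y ∈ hS.toFinset, w y * (L y - a) = 0 := by
    simp only [mul_sub, Finset.sum_sub_distrib, hLp, ← Finset.sum_mul, hw1]
    ring
  have hzero : ∀ y ∈ hS.toFinset, w y * (L y - a) = 0 := by
    intro y hy
    have := (Finset.sum_eq_zero_iff_of_nonneg ?_).mp hsum0 y hy
    · exact this
    · intro z hz
      exact mul_nonneg (hw0 z (hS.mem_toFinset.mp hz))
        (sub_nonneg.mpr (hge z (hS.mem_toFinset.mp hz)))
  have hwz : ∀ y ∈ hS.toFinset, y ≠ x₀ → w y = 0 := by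
    intro y hy hne
    rcases mul_eq_zero.mp (hzero y hy) with h | h
    · exact h
    · exact absurd (huniq y (hS.mem_toFinset.mp hy) (by linarith [sub_eq_zero.mp h])) hne
  have hwx₀ : w x₀ = 1 := by
    rw [← hw1]
    rw [Finset.sum_eq_single_of_mem x₀ hx₀t]
    intro y hy hne
    exact hwz y hy hne
  rw [← hwp, Finset.sum_eq_single_of_mem x₀ hx₀t, hwx₀, one_smul]
  intro y hy hne
  rw [hwz y hy hne, zero_smul]

set_option linter.unusedVariables false in
private lemma csl_exists_functional {m : ℕ} (X : Set (Fin m → ℝ)) (hXfin : X.Finite)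
    (R : Set (Fin m → ℝ)) (hR : R ⊆ X) (hRfin : R.Finite)
    (d : Fin m → ℝ)
    (f : (Fin m → ℝ) →L[ℝ] ℝ) (hfr : ∀ r ∈ R, f r < f d)
    (g : (Fin m → ℝ) →ₗ[ℝ] ℝ) (hginj : ∀ x ∈ X, ∀ y ∈ X, g x = g y → x = y) :
    ∃ F : (Fin m → ℝ) →ₗ[ℝ] ℝ,
      (∀ x ∈ X, ∀ y ∈ X, F x = F y → x = y) ∧ (∀ r ∈ R, F r < F d) := by
  classical
  set δ : ℝ := if hne : hRfin.toFinset.Nonempty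
    then hRfin.toFinset.inf' hne (fun r => (f d - f r) / (|g r - g d| + 1)) else 1 with hδdef
  have hδpos : 0 < δ := by
    rw [hδdef]
    split_ifs with hne
    · rw [Finset.lt_inf'_iff]
      intro r hrt
      have hrR : r ∈ R := hRfin.mem_toFinset.mp hrt
      have h1 : 0 < f d - f r := sub_pos.mpr (hfr r hrR)
      have h2 : (0:ℝ) < |g r - g d| + 1 := by positivity
      positivity
    · norm_num
  have hδle : ∀ r ∈ R, δ * (|g r - g d| + 1) ≤ f d - f r := by
    intro r hrR
    have hrt : r ∈ hRfin.toFinset := hRfin.mem_toFinset.mpr hrR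
    have h2 : (0:ℝ) < |g r - g d| + 1 := by positivity
    have : δ ≤ (f d - f r) / (|g r - g d| + 1) := by
      rw [hδdef]; rw [dif_pos ⟨r, hrt⟩]
      exact Finset.inf'_le _ hrt
    calc δ * (|g r - g d| + 1) ≤ ((f d - f r) / (|g r - g d| + 1)) * (|g r - g d| + 1) :=
          mul_le_mul_of_nonneg_right this h2.le
      _ = f d - f r := div_mul_cancel₀ _ h2.ne'
  set Bad : Set ℝ := {ε | ∃ x ∈ X, ∃ y ∈ X, x ≠ y ∧ f x + ε * g x = f y + ε * g y} with hBaddef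
  have hBadfin : Bad.Finite := by
    apply Set.Finite.subset
      (Set.Finite.image (fun p : (Fin m → ℝ) × (Fin m → ℝ) => (f p.2 - f p.1) / (g p.1 - g p.2))
        (hXfin.prod hXfin))
    rintro ε ⟨x, hx, y, hy, hxy, heq⟩
    refine ⟨(x, y), Set.mk_mem_prod hx hy, ?_⟩
    have hgne : g x - g y ≠ 0 := sub_ne_zero.mpr (fun h => hxy (hginj x hx y hy h))
    simp only
    rw [div_eq_iff hgne]
    linarith
  obtain ⟨ε, hεI, hεBad⟩ : ∃ ε ∈ Set.Ioo (0:ℝ) δ, ε ∉ Bad := by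
    by_contra h
    push_neg at h
    exact (Set.Ioo_infinite hδpos) (hBadfin.subset h)
  set F : (Fin m → ℝ) →ₗ[ℝ] ℝ := f.toLinearMap + ε • g with hFdef
  have hFeval : ∀ x, F x = f x + ε * g x := fun x => rfl
  refine ⟨F, ?_, ?_⟩
  · intro x hx y hy hF
    by_contra hxy
    exact hεBad ⟨x, hx, y, hy, hxy, by rw [← hFeval, ← hFeval, hF]⟩
  · intro r hrR
    rw [hFeval, hFeval]
    have h1 : ε * (|g r - g d| + 1) < δ * (|g r - g d| + 1) :=
      mul_lt_mul_of_pos_right hεI.2 (by positivity)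
    have h2 := hδle r hrR
    have h3 : ε * (g r - g d) ≤ ε * |g r - g d| :=
      mul_le_mul_of_nonneg_left (le_abs_self _) hεI.1.le
    have h4 : ε * |g r - g d| ≤ ε * (|g r - g d| + 1) := by nlinarith [hεI.1]
    have h5 : ε * (g r - g d) = ε * g r - ε * g d := by ring
    linarith

set_option linter.unusedVariables false in
private lemma csl_main {m : ℕ} (X : Set (Fin m → ℝ)) (hXfin : X.Finite)
    (R : Set (Fin m → ℝ)) (hR : R ⊆ X)
    (d : Fin m → ℝ)
    (F : (Fin m → ℝ) →ₗ[ℝ] ℝ)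
    (hFinj : ∀ x ∈ X, ∀ y ∈ X, F x = F y → x = y)
    (hFr : ∀ r ∈ R, F r < F d) :
    ∃ (l : ℕ) (ds : Fin l → (Fin m → ℝ)),
      Function.Injective ds ∧
      Set.range ds ⊆ X ∧
      R ∩ Set.range ds = ∅ ∧
      d ∉ convexHull ℝ (X \ Set.range ds) ∧
      (∀ i : Fin l,
        convexHull ℝ (ds '' {j | j ≤ i}) ∩
          convexHull ℝ ((ds '' {j | i ≤ j}) ∪ (X \ Set.range ds)) = {ds i}) ∧
      convexHull ℝ (Set.range ds) ∩ convexHull ℝ (X \ Set.range ds) = ∅ := by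
  classical
  set B : Set (Fin m → ℝ) := {x ∈ X | F d ≤ F x} with hBdef
  have hBX : B ⊆ X := fun x hx => hx.1
  have hBfin : B.Finite := hXfin.subset hBX
  set Bf : Finset (Fin m → ℝ) := hBfin.toFinset with hBfdef
  have hmemBf : ∀ x, x ∈ Bf ↔ x ∈ B := fun x => hBfin.mem_toFinset
  set l : ℕ := Bf.card with hldef
  set t : Finset ℝ := Bf.image F with htdef
  have htcard : t.card = l := by
    rw [htdef, Finset.card_image_of_injOn]
    intro x hx y hy hxy
    exact hFinj x (hBX ((hmemBf x).mp hx)) y (hBX ((hmemBf y).mp hy)) hxy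
  set e : Fin l ≃o {x // x ∈ t} := t.orderIsoOfFin htcard with hedef
  have hchoice : ∀ i : Fin l, ∃ b, b ∈ Bf ∧ F b = (e i.rev : ℝ) := by
    intro i
    have h2 : (e i.rev : ℝ) ∈ Finset.image F Bf := (e i.rev).2
    rw [Finset.mem_image] at h2
    obtain ⟨b, hb, hfb⟩ := h2
    exact ⟨b, hb, hfb⟩
  choose ds hdsB hdsF using hchoice
  have hdsBmem : ∀ i, ds i ∈ B := fun i => (hmemBf _).mp (hdsB i)
  have hdsX : ∀ i, ds i ∈ X := fun i => hBX (hdsBmem i)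
  -- injectivity
  have hdsInj : Function.Injective ds := by
    intro i j hij
    have : (e i.rev : ℝ) = (e j.rev : ℝ) := by rw [← hdsF, ← hdsF, hij]
    have : e i.rev = e j.rev := Subtype.ext this
    have : i.rev = j.rev := e.injective this
    exact Fin.rev_injective this
  -- antitone
  have hdsAnti : ∀ i j : Fin l, j ≤ i → F (ds i) ≤ F (ds j) := by
    intro i j hji
    rw [hdsF, hdsF]
    exact_mod_cast e.monotone (Fin.rev_le_rev.mpr hji)
  -- range = B
  have hrange : Set.range ds = B := by
    apply Set.Subset.antisymm
    · rintro _ ⟨i, rfl⟩; exact hdsBmem i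
    · intro b hb
      have hbt : F b ∈ t := Finset.mem_image.mpr ⟨b, (hmemBf b).mpr hb, rfl⟩
      obtain ⟨j, hj⟩ := e.surjective ⟨F b, hbt⟩
      refine ⟨j.rev, ?_⟩
      have : F (ds j.rev) = F b := by
        rw [hdsF]; rw [Fin.rev_rev, hj]
      exact hFinj _ (hdsX _) _ (hBX hb) this
  have hXBlt : ∀ x ∈ X \ Set.range ds, F x < F d := by
    rintro x ⟨hxX, hxB⟩
    rw [hrange] at hxB
    by_contra hcon
    exact hxB ⟨hxX, le_of_not_gt hcon⟩
  have hBge : ∀ x ∈ Set.range ds, F d ≤ F x := by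
    intro x hx; rw [hrange] at hx; exact hx.2
  refine ⟨l, ds, hdsInj, ?_, ?_, ?_, ?_, ?_⟩
  · rintro _ ⟨i, rfl⟩; exact hdsX i
  · -- R ∩ range = ∅
    rw [Set.eq_empty_iff_forall_notMem]
    rintro r ⟨hrR, hrB⟩
    exact absurd (hBge r hrB) (not_le.mpr (hFr r hrR))
  · -- d ∉ convexHull (X \ range)
    intro hcon
    exact lt_irrefl (F d) (hull_bound_lt F hXBlt hcon)
  · -- peeling
    intro i
    apply Set.Subset.antisymm
    · rintro p ⟨hp1, hp2⟩
      have ha1 : ∀ x ∈ ds '' {j | j ≤ i}, F (ds i) ≤ F x := by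
        rintro _ ⟨j, hj, rfl⟩; exact hdsAnti i j hj
      have ha2 : ∀ x ∈ (ds '' {j | i ≤ j}) ∪ (X \ Set.range ds), F x ≤ F (ds i) := by
        rintro x (⟨j, hj, rfl⟩ | hx)
        · exact hdsAnti j i hj
        · exact le_trans (hXBlt x hx).le ((hdsBmem i).2)
      have hge := hull_bound_ge F ha1 hp1
      have hle := hull_bound_le F ha2 hp2
      have hpa : F p = F (ds i) := le_antisymm hle hge
      have hSfin : (ds '' {j | j ≤ i}).Finite := (Set.toFinite _).image ds
      have : p = ds i := by
        refine face_point F hSfin ⟨i, le_refl i, rfl⟩ ha1 ?_ hp1 hpa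
        rintro _ ⟨j, _, rfl⟩ hfj
        exact congrArg ds (hdsInj (hFinj _ (hdsX j) _ (hdsX i) hfj))
      exact this ▸ rfl
    · rintro p rfl
      exact ⟨subset_convexHull ℝ _ ⟨i, le_refl i, rfl⟩,
        subset_convexHull ℝ _ (Or.inl ⟨i, le_refl i, rfl⟩)⟩
  · -- final disjointness
    rw [Set.eq_empty_iff_forall_notMem]
    rintro p ⟨hp1, hp2⟩
    exact lt_irrefl (F d) (lt_of_le_of_lt (hull_bound_ge F hBge hp1) (hull_bound_lt F hXBlt hp2))


set_option linter.unusedVariables false in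
private theorem cube_separation_lemma_aux {m : ℕ} (X : Set (Fin m → ℝ))
    (hX : X = {x | ∀ i, x i = 0 ∨ x i = 1})
    (R : Set (Fin m → ℝ)) (hR : R ⊆ X)
    (d : Fin m → ℝ) (hd : d ∈ convexHull ℝ X \ convexHull ℝ R) :
    ∃ (l : ℕ) (ds : Fin l → (Fin m → ℝ)),
      Function.Injective ds ∧
      Set.range ds ⊆ X ∧
      R ∩ Set.range ds = ∅ ∧
      d ∉ convexHull ℝ (X \ Set.range ds) ∧
      (∀ i : Fin l,
        convexHull ℝ (ds '' {j | j ≤ i}) ∩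
          convexHull ℝ ((ds '' {j | i ≤ j}) ∪ (X \ Set.range ds)) = {ds i}) ∧
      convexHull ℝ (Set.range ds) ∩ convexHull ℝ (X \ Set.range ds) = ∅ := by

  classical
  obtain ⟨hdX, hdR⟩ := hd
  -- X is finite
  have hXfin : X.Finite := by
    have hsub : X ⊆ Set.pi Set.univ (fun _ : Fin m => ({0, 1} : Set ℝ)) := by
      rw [hX]; intro x hx i _
      rcases hx i with h | h <;> simp [h]
    exact (Set.Finite.pi (fun _ => (Set.finite_singleton (1:ℝ)).insert 0)).subset hsub
  have hRfin : R.Finite := hXfin.subset hR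
  -- separating functional
  obtain ⟨f, u, hfu, hud⟩ := _root_.geometric_hahn_banach_closed_point
    (convex_convexHull ℝ R) (hRfin.isClosed_convexHull (𝕜 := ℝ)) hdR
  have hfr : ∀ r ∈ R, f r < f d := fun r hr => (hfu r (subset_convexHull ℝ R hr)).trans hud
  -- the generic functional g
  set g : (Fin m → ℝ) →ₗ[ℝ] ℝ := ∑ i : Fin m, (2:ℝ)^(i:ℕ) • LinearMap.proj i with hg
  have hgeval : ∀ x : Fin m → ℝ, g x = ∑ i : Fin m, (2:ℝ)^(i:ℕ) * x i := by
    intro x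
    simp [hg, LinearMap.sum_apply, LinearMap.smul_apply, LinearMap.proj_apply, smul_eq_mul]
  have hginj : ∀ x ∈ X, ∀ y ∈ X, g x = g y → x = y := by
    intro x hx y hy hgxy
    rw [hX] at hx hy
    set bx : Fin m → Fin 2 := fun i => if x i = 1 then 1 else 0 with hbxdef
    set by' : Fin m → Fin 2 := fun i => if y i = 1 then 1 else 0 with hbydef
    have hxb : ∀ i, x i = ((bx i : ℕ) : ℝ) := by
      intro i; rcases hx i with h | h <;> simp [hbxdef, h]
    have hyb : ∀ i, y i = ((by' i : ℕ) : ℝ) := by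
      intro i; rcases hy i with h | h <;> simp [hbydef, h]
    have hcast : ∀ b : Fin m → Fin 2, ((finFunctionFinEquiv b : ℕ) : ℝ)
        = ∑ i : Fin m, (2:ℝ)^(i:ℕ) * ((b i : ℕ) : ℝ) := by
      intro b
      rw [finFunctionFinEquiv_apply]
      push_cast
      exact Finset.sum_congr rfl (fun i _ => by ring)
    have hnat : ((finFunctionFinEquiv bx : ℕ) : ℝ) = ((finFunctionFinEquiv by' : ℕ) : ℝ) := by
      rw [hcast, hcast]
      calc ∑ i : Fin m, (2:ℝ)^(i:ℕ) * ((bx i : ℕ) : ℝ)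
          = g x := by rw [hgeval]; exact Finset.sum_congr rfl (fun i _ => by rw [← hxb])
        _ = g y := hgxy
        _ = ∑ i : Fin m, (2:ℝ)^(i:ℕ) * ((by' i : ℕ) : ℝ) := by
            rw [hgeval]; exact Finset.sum_congr rfl (fun i _ => by rw [← hyb])
    have hbeq : bx = by' := finFunctionFinEquiv.injective (Fin.ext (Nat.cast_injective hnat))
    funext i
    rw [hxb i, hyb i, congrFun hbeq i]
  obtain ⟨F, hFinj, hFr⟩ := csl_exists_functional X hXfin R hR hRfin d f hfr g hginj
  exact csl_main X hXfin R hR d F hFinj hFr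

/-- Separation lemma on the 0/1 cube `X = {0,1}^m`. -/
theorem cube_separation_lemma {m : ℕ} (X : Set (Fin m → ℝ))
    (hX : X = {x | ∀ i, x i = 0 ∨ x i = 1})
    (R : Set (Fin m → ℝ)) (hR : R ⊆ X)
    (d : Fin m → ℝ) (hd : d ∈ convexHull ℝ X \ convexHull ℝ R) :
    ∃ (l : ℕ) (ds : Fin l → (Fin m → ℝ)),
      Function.Injective ds ∧
      Set.range ds ⊆ X ∧
      R ∩ Set.range ds = ∅ ∧
      d ∉ convexHull ℝ (X \ Set.range ds) ∧
      (∀ i : Fin l,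
        convexHull ℝ (ds '' {j | j ≤ i}) ∩
          convexHull ℝ ((ds '' {j | i ≤ j}) ∪ (X \ Set.range ds)) = {ds i}) ∧
      convexHull ℝ (Set.range ds) ∩ convexHull ℝ (X \ Set.range ds) = ∅ := by
  exact cube_separation_lemma_aux X hX R hR d hd
end
end
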